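/- arXiv:2503.05343 — 2 statements merged into one kernel-verified Lean document; each statement's English description precedes it below -/
import Mathlib

section
/- Let p be a partition of 2n all of whose parts are odd (hence p is an orthogonal partition of 2n with an even number of parts, and n* equals half the number of parts of p, so n* ≥ 1). Then [p_1 p_1 (2n*−1) 1]^{SO_{2n}} = (p^t)_{SO_{2n}}. (Theorem 4.2(3) of the paper for G_n = SO^α_{2n} in the case that all parts have the same odd parity; here η_{so_{2n},so_{2n}}(p) = (p^t)_{SO_{2n}} and [p_1 p_1 (2n*−1) 1] is a partition of 2n.) -/
/-!  Basic combinatorics of partitions: transpose, dominance order,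
symplectic/orthogonal partitions, collapses and expansions, and the
dimension formulas for nilpotent orbits. -/

/-- `p` is a partition of `N`: a multiset of positive integers summing to `N`. -/
def IsPartitionOf (N : ℕ) (p : Multiset ℕ) : Prop := p.sum = N ∧ 0 ∉ p

/-- Sum of the `k` largest parts of `p`:
`Σ_{j ≥ 1} min k #{i : p_i ≥ j}`. -/
def psum (p : Multiset ℕ) (k : ℕ) : ℕ :=
  ((Multiset.range p.sum).map (fun j => min k (p.countP (fun a => j + 1 ≤ a)))).sum

/-- Dominance order on partitions: `DomLE p q` means `p ≤ q`, i.e. for every `k`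
the sum of the `k` largest parts of `p` is at most that of `q`. -/
def DomLE (p q : Multiset ℕ) : Prop := ∀ k, psum p k ≤ psum q k

/-- The transpose of a partition: its `j`-th part is `#{i : p_i ≥ j}`. -/
def transpose (p : Multiset ℕ) : Multiset ℕ :=
  (((Multiset.range p.sum).map (fun j => p.countP (fun a => j + 1 ≤ a))).filter (0 < ·))

/-- A partition is symplectic if every odd part occurs with even multiplicity. -/
def IsSymplectic (p : Multiset ℕ) : Prop := ∀ a, Odd a → Even (p.count a)

/-- A partition is orthogonal if every even part occurs with even multiplicity. -/
def IsOrthogonal (p : Multiset ℕ) : Prop := ∀ a, Even a → Even (p.count a)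

/-- `q` is the `P`-collapse of `p` (as partitions of `N`): the largest partition of `N`
satisfying `P` which is `≤ p` in the dominance order. -/
def IsCollapseOf (P : Multiset ℕ → Prop) (N : ℕ) (p q : Multiset ℕ) : Prop :=
  IsPartitionOf N q ∧ P q ∧ DomLE q p ∧
    ∀ q', IsPartitionOf N q' → P q' → DomLE q' p → DomLE q' q

open Classical in
noncomputable def collapseOf (P : Multiset ℕ → Prop) (N : ℕ) (p : Multiset ℕ) : Multiset ℕ :=
  if h : ∃ q, IsCollapseOf P N p q then h.choose else 0

/-- The symplectic collapse `p_{Sp_N}` of a partition `p` of `N` (`N` even). -/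
noncomputable def sympCollapse (N : ℕ) (p : Multiset ℕ) : Multiset ℕ :=
  collapseOf IsSymplectic N p

/-- The orthogonal collapse `p_{SO_N}` of a partition `p` of `N`. -/
noncomputable def orthCollapse (N : ℕ) (p : Multiset ℕ) : Multiset ℕ :=
  collapseOf IsOrthogonal N p

/-- A symplectic partition `p` of `N` is special if `(((p^t)_{Sp_N})^t)_{Sp_N} = p`. -/
def IsSpecialSymp (N : ℕ) (p : Multiset ℕ) : Prop :=
  sympCollapse N (transpose (sympCollapse N (transpose p))) = p

/-- An orthogonal partition `p` of `N` is special if `(((p^t)_{SO_N})^t)_{SO_N} = p`. -/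
def IsSpecialOrth (N : ℕ) (p : Multiset ℕ) : Prop :=
  orthCollapse N (transpose (orthCollapse N (transpose p))) = p

/-- `q` is the `(P, Sp)`-expansion of `p`: the smallest partition of `N` satisfying
`P` and the speciality predicate `Sp` which is `≥ p` in the dominance order. -/
def IsExpansionOf (P Sp : Multiset ℕ → Prop) (N : ℕ) (p q : Multiset ℕ) : Prop :=
  IsPartitionOf N q ∧ P q ∧ Sp q ∧ DomLE p q ∧
    ∀ q', IsPartitionOf N q' → P q' → Sp q' → DomLE p q' → DomLE q q'

open Classical in
noncomputable def expansionOf (P Sp : Multiset ℕ → Prop) (N : ℕ) (p : Multiset ℕ) :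
    Multiset ℕ :=
  if h : ∃ q, IsExpansionOf P Sp N p q then h.choose else 0

/-- The symplectic expansion `p^{Sp_N}`: the smallest special symplectic partition of `N`
which is `≥ p` in the dominance order. -/
noncomputable def sympExpansion (N : ℕ) (p : Multiset ℕ) : Multiset ℕ :=
  expansionOf IsSymplectic (IsSpecialSymp N) N p

/-- The orthogonal expansion `p^{SO_N}`: the smallest special orthogonal partition of `N`
which is `≥ p` in the dominance order. -/
noncomputable def orthExpansion (N : ℕ) (p : Multiset ℕ) : Multiset ℕ :=
  expansionOf IsOrthogonal (IsSpecialOrth N) N p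

/-- The smallest part of a (nonempty) partition. -/
def minPart (p : Multiset ℕ) : ℕ := p.sum - psum p (Multiset.card p - 1)

/-- The largest part of a partition. -/
def maxPart (p : Multiset ℕ) : ℕ := psum p 1

/-- `p^-`: decrease the smallest part of `p` by `1` (deleting it if it becomes `0`). -/
def pMinus (p : Multiset ℕ) : Multiset ℕ :=
  ((minPart p - 1) ::ₘ p.erase (minPart p)).filter (0 < ·)

/-- `p^+`: increase the largest part of `p` by `1`. -/
def pPlus (p : Multiset ℕ) : Multiset ℕ :=
  (maxPart p + 1) ::ₘ p.erase (maxPart p)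

/-- `dim_{sp_{2n}}(p) = 2n² + n − ½(Σ_i ((p^t)_i)² + #{i : p_i odd})`,
the dimension of the nilpotent orbit of `sp_{2n}` attached to a symplectic
partition `p` of `2n`. -/
def dimSp (n : ℕ) (p : Multiset ℕ) : ℚ :=
  (2 * (n : ℚ) ^ 2 + n) -
    (((transpose p).map (fun x => (x : ℚ) ^ 2)).sum + (p.countP (Odd ·) : ℚ)) / 2

/-- `dim_{so_m}(p) = m(m−1)/2 − ½(Σ_i ((p^t)_i)² − #{i : p_i odd})`,
the dimension of the nilpotent orbit of `so_m` attached to an orthogonal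
partition `p` of `m`. -/
def dimSO (m : ℕ) (p : Multiset ℕ) : ℚ :=
  ((m : ℚ) * ((m : ℚ) - 1)) / 2 -
    (((transpose p).map (fun x => (x : ℚ) ^ 2)).sum - (p.countP (Odd ·) : ℚ)) / 2

/-- The partition `p_1 = [⌊b_1/2⌋^{a_1} ⋯ ⌊b_r/2⌋^{a_r}]^t` attached to
`p = [b_1^{a_1} ⋯ b_r^{a_r}]` (zero entries discarded). -/
def pOne (p : Multiset ℕ) : Multiset ℕ := transpose (p.map (· / 2))

/-- `n* = ⌊(Σ_{i : b_i odd} a_i)/2⌋`, i.e. half the number of odd parts. -/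
def nStar (p : Multiset ℕ) : ℕ := p.countP (Odd ·) / 2

/-- `[q q (m)]`: two copies of `q` together with one extra part `m`
(no extra part when `m = 0`). -/
def qqm (q : Multiset ℕ) (m : ℕ) : Multiset ℕ :=
  if m = 0 then q + q else m ::ₘ (q + q)


namespace CAux

/-- column function: `col s c` = number of parts `≥ c+1`. -/
def col (s : Multiset ℕ) (c : ℕ) : ℕ := s.countP (fun a => c + 1 ≤ a)

lemma col_mono {s : Multiset ℕ} : ∀ {c c' : ℕ}, c ≤ c' → col s c' ≤ col s c := by
  intro c c' h
  unfold col
  induction s using Multiset.induction_on with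
  | empty => simp
  | cons a t ih =>
    rw [Multiset.countP_cons, Multiset.countP_cons]
    have : (if c' + 1 ≤ a then 1 else 0) ≤ (if c + 1 ≤ a then 1 else 0) := by
      split_ifs with h1 h2 <;> omega
    omega

lemma mem_le_sum {s : Multiset ℕ} {a : ℕ} (h : a ∈ s) : a ≤ s.sum :=
  Multiset.single_le_sum (fun _ _ => Nat.zero_le _) a h

lemma col_le_card (s : Multiset ℕ) (c : ℕ) : col s c ≤ Multiset.card s :=
  Multiset.countP_le_card _ _

lemma card_le_sum {s : Multiset ℕ} (hs : 0 ∉ s) : Multiset.card s ≤ s.sum := by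
  induction s using Multiset.induction_on with
  | empty => simp
  | cons a t ih =>
    simp only [Multiset.mem_cons, not_or] at hs
    have h1 : 1 ≤ a := Nat.one_le_iff_ne_zero.mpr (fun h => hs.1 h.symm)
    have := ih hs.2
    simp only [Multiset.card_cons, Multiset.sum_cons]
    omega

lemma col_eq_zero {s : Multiset ℕ} {c : ℕ} (h : s.sum ≤ c) : col s c = 0 := by
  rw [col, Multiset.countP_eq_zero]
  intro a ha
  have := mem_le_sum ha
  omega

lemma col_pos_lt_sum {s : Multiset ℕ} {c : ℕ} (h : 1 ≤ col s c) : c < s.sum := by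
  by_contra hc
  rw [col_eq_zero (by omega)] at h; omega

/-- row function: `row s i` = the `(i+1)`-th largest part. -/
def row (s : Multiset ℕ) (i : ℕ) : ℕ :=
  ((Finset.range s.sum).filter (fun c => i + 1 ≤ col s c)).card

/-- Galois connection between rows and columns. -/
lemma galois {s : Multiset ℕ} {i c : ℕ} : c + 1 ≤ row s i ↔ i + 1 ≤ col s c := by
  constructor
  · intro h
    by_contra hc
    push_neg at hc
    have hsub : (Finset.range s.sum).filter (fun c' => i + 1 ≤ col s c') ⊆ Finset.range c := by
      intro c' hc'
      simp only [Finset.mem_filter, Finset.mem_range] at hc' ⊢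
      by_contra hge
      push_neg at hge
      have := col_mono (s := s) hge
      omega
    have := Finset.card_le_card hsub
    simp only [Finset.card_range] at this
    rw [row] at h; omega
  · intro h
    have hsub : Finset.range (c+1) ⊆ (Finset.range s.sum).filter (fun c' => i + 1 ≤ col s c') := by
      intro c' hc'
      simp only [Finset.mem_range] at hc'
      have h1 : i + 1 ≤ col s c' := le_trans h (col_mono (by omega))
      have h2 : c' < s.sum := col_pos_lt_sum (by omega)
      simp only [Finset.mem_filter, Finset.mem_range]
      exact ⟨h2, h1⟩
    have := Finset.card_le_card hsub
    simpa [row] using this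

lemma row_mono {s : Multiset ℕ} {i i' : ℕ} (h : i ≤ i') : row s i' ≤ row s i := by
  apply Finset.card_le_card
  intro c hc
  simp only [Finset.mem_filter] at hc ⊢
  exact ⟨hc.1, by omega⟩

lemma row_le_sum (s : Multiset ℕ) (i : ℕ) : row s i ≤ s.sum := by
  rw [row]
  calc _ ≤ (Finset.range s.sum).card := Finset.card_filter_le _ _
  _ = s.sum := Finset.card_range _

lemma row_eq_zero {s : Multiset ℕ} {i : ℕ} (h : Multiset.card s ≤ i) : row s i = 0 := by
  rw [row, Finset.card_eq_zero, Finset.filter_eq_empty_iff]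
  intro c _
  have := col_le_card s c
  omega

lemma row_lt_card {s : Multiset ℕ} {i : ℕ} (h : 1 ≤ row s i) : i < Multiset.card s := by
  by_contra hc
  rw [row_eq_zero (by omega)] at h; omega

/-- `psum` as a Finset sum over columns. -/
lemma psum_eq_sum_col (s : Multiset ℕ) (k : ℕ) :
    psum s k = ∑ c ∈ Finset.range s.sum, min k (col s c) := by
  rw [psum, Finset.sum_eq_multiset_sum, Finset.range_val]
  rfl

lemma min_eq_sum_range (k v : ℕ) : min k v = ∑ i ∈ Finset.range k, (if i + 1 ≤ v then 1 else 0) := by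
  induction k with
  | zero => simp
  | succ k ih =>
    rw [Finset.sum_range_succ, ← ih]
    split_ifs with h <;> omega

/-- `psum s k` is the sum of the `k` largest parts. -/
lemma psum_eq_sum_row (s : Multiset ℕ) (k : ℕ) :
    psum s k = ∑ i ∈ Finset.range k, row s i := by
  rw [psum_eq_sum_col]
  have : ∀ c ∈ Finset.range s.sum, min k (col s c)
      = ∑ i ∈ Finset.range k, (if i + 1 ≤ col s c then 1 else 0) := by
    intro c _; exact min_eq_sum_range _ _
  rw [Finset.sum_congr rfl this, Finset.sum_comm]
  apply Finset.sum_congr rfl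
  intro i _
  rw [row, Finset.card_filter]

lemma psum_succ (s : Multiset ℕ) (k : ℕ) : psum s (k+1) = psum s k + row s k := by
  rw [psum_eq_sum_row, psum_eq_sum_row, Finset.sum_range_succ]

lemma psum_zero (s : Multiset ℕ) : psum s 0 = 0 := by simp [psum_eq_sum_row]

lemma psum_mono_k {s : Multiset ℕ} {k k' : ℕ} (h : k ≤ k') : psum s k ≤ psum s k' := by
  rw [psum_eq_sum_col, psum_eq_sum_col]
  apply Finset.sum_le_sum
  intro c _
  exact le_min (le_trans (min_le_left _ _) h) (min_le_right _ _)

/-- double counting: sum of the first `K` columns. -/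
lemma sum_col_eq (s : Multiset ℕ) (K : ℕ) :
    ∑ c ∈ Finset.range K, col s c = (s.map (fun a => min a K)).sum := by
  induction s using Multiset.induction_on with
  | empty => simp [col]
  | cons a t ih =>
    have : ∀ c, col (a ::ₘ t) c = col t c + (if c + 1 ≤ a then 1 else 0) := by
      intro c; rw [col, col, Multiset.countP_cons]
    simp only [this, Finset.sum_add_distrib, ih, Multiset.map_cons, Multiset.sum_cons]
    have : ∑ c ∈ Finset.range K, (if c + 1 ≤ a then 1 else 0) = min a K := by
      rw [← Finset.card_filter]
      have : (Finset.range K).filter (fun c => c + 1 ≤ a) = Finset.range (min a K) := by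
        ext c
        simp only [Finset.mem_filter, Finset.mem_range, Finset.mem_range, lt_min_iff]
        omega
      rw [this, Finset.card_range]
    omega

lemma sum_col_all (s : Multiset ℕ) {K : ℕ} (h : s.sum ≤ K) :
    ∑ c ∈ Finset.range K, col s c = s.sum := by
  rw [sum_col_eq]
  have : s.map (fun a => min a K) = s.map id := by
    apply Multiset.map_congr rfl
    intro a ha
    have := mem_le_sum ha
    simp; omega
  rw [this, Multiset.map_id]

lemma psum_card (s : Multiset ℕ) {k : ℕ} (h : Multiset.card s ≤ k) : psum s k = s.sum := by
  rw [psum_eq_sum_col]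
  have : ∀ c ∈ Finset.range s.sum, min k (col s c) = col s c := by
    intro c _
    have := col_le_card s c
    omega
  rw [Finset.sum_congr rfl this, sum_col_all s le_rfl]

lemma psum_le_sum (s : Multiset ℕ) (k : ℕ) : psum s k ≤ s.sum := by
  rcases le_or_gt (Multiset.card s) k with h | h
  · exact le_of_eq (psum_card s h)
  · calc psum s k ≤ psum s (Multiset.card s) := psum_mono_k (by omega)
    _ = s.sum := psum_card s le_rfl

/-- recover columns from rows. -/
lemma col_eq_card_row {s : Multiset ℕ} {c K : ℕ} (hK : Multiset.card s ≤ K) :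
    col s c = ((Finset.range K).filter (fun i => c + 1 ≤ row s i)).card := by
  have : (Finset.range K).filter (fun i => c + 1 ≤ row s i) = Finset.range (col s c) := by
    ext i
    simp only [Finset.mem_filter, Finset.mem_range]
    constructor
    · intro ⟨_, h2⟩
      have := galois.mp h2; omega
    · intro h
      have h2 : i + 1 ≤ col s c := by omega
      have := col_le_card s c
      exact ⟨by omega, galois.mpr h2⟩
  rw [this, Finset.card_range]

lemma countP_split (s : Multiset ℕ) {v : ℕ} (hv : 1 ≤ v) :
    s.count v + s.countP (fun a => v + 1 ≤ a) = s.countP (fun a => v ≤ a) := by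
  induction s using Multiset.induction_on with
  | empty => simp
  | cons a t ih =>
    rw [Multiset.count_cons, Multiset.countP_cons, Multiset.countP_cons]
    split_ifs with h1 h2 h3 <;> omega

lemma count_eq_col_sub {s : Multiset ℕ} {v : ℕ} (hv : 1 ≤ v) :
    s.count v + col s v = col s (v-1) := by
  have h1 : col s (v-1) = s.countP (fun a => v ≤ a) := by
    rw [col]; congr 1; ext a; constructor <;> intro <;> omega
  rw [h1, col]
  exact countP_split s hv

/-- partitions with equal rows are equal. -/
lemma eq_of_row_eq {s s' : Multiset ℕ} (hs : 0 ∉ s) (hs' : 0 ∉ s')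
    (hsum : s.sum = s'.sum) (h : ∀ i, row s i = row s' i) : s = s' := by
  have hcol : ∀ c, col s c = col s' c := by
    intro c
    have hK : Multiset.card s ≤ s.sum := card_le_sum hs
    have hK' : Multiset.card s' ≤ s.sum := hsum ▸ card_le_sum hs'
    rw [col_eq_card_row (K := s.sum) hK, col_eq_card_row (K := s.sum) hK']
    apply Finset.card_nbij id (fun i hi => by simpa [h i] using hi)
      (fun i _ j _ hij => hij)
    intro i hi
    refine ⟨i, by simpa [h i] using hi, rfl⟩
  ext v
  rcases Nat.eq_zero_or_pos v with rfl | hv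
  · rw [Multiset.count_eq_zero_of_notMem hs, Multiset.count_eq_zero_of_notMem hs']
  · have h1 := count_eq_col_sub (s := s) hv
    have h2 := count_eq_col_sub (s := s') hv
    rw [hcol v, hcol (v-1)] at h1
    omega

lemma eq_of_psum_eq {s s' : Multiset ℕ} (hs : 0 ∉ s) (hs' : 0 ∉ s')
    (h : ∀ k, psum s k = psum s' k) : s = s' := by
  have hsum : s.sum = s'.sum := by
    have h1 := psum_card s (k := Multiset.card s + Multiset.card s') (by omega)
    have h2 := psum_card s' (k := Multiset.card s + Multiset.card s') (by omega)
    rw [← h1, ← h2, h]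
  refine eq_of_row_eq hs hs' hsum (fun i => ?_)
  have h1 := psum_succ s i
  have h2 := psum_succ s' i
  rw [h i, h (i+1)] at h1
  omega

end CAux

namespace CAux

/-! ## Section B : transpose -/

lemma transpose_eq (s : Multiset ℕ) :
    transpose s = ((Multiset.range s.sum).map (col s)).filter (0 < ·) := rfl

lemma zero_notMem_transpose (s : Multiset ℕ) : 0 ∉ transpose s := by
  rw [transpose_eq]
  intro h
  have := Multiset.of_mem_filter h
  omega

lemma sum_filter_pos (t : Multiset ℕ) : (t.filter (0 < ·)).sum = t.sum := by
  induction t using Multiset.induction_on with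
  | empty => simp
  | cons a u ih =>
    rw [Multiset.filter_cons]
    split_ifs with h
    · simp [ih]
    · have : a = 0 := by omega
      simp [this, ih]

lemma multiset_range_sum (n : ℕ) (f : ℕ → ℕ) :
    ((Multiset.range n).map f).sum = ∑ c ∈ Finset.range n, f c := by
  rw [Finset.sum_eq_multiset_sum, Finset.range_val]

lemma transpose_sum (s : Multiset ℕ) : (transpose s).sum = s.sum := by
  rw [transpose_eq, sum_filter_pos, multiset_range_sum, sum_col_all s le_rfl]

lemma sum_split (f : ℕ → ℕ) {j N : ℕ} (h : j ≤ N) :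
    ∑ c ∈ Finset.range N, f c = ∑ c ∈ Finset.range j, f c + ∑ c ∈ Finset.Ico j N, f c := by
  simp only [Finset.range_eq_Ico]
  exact (Finset.sum_Ico_consecutive f (Nat.zero_le j) h).symm

lemma sum_le_of_le {s t : Multiset ℕ} (h : s ≤ t) : s.sum ≤ t.sum := by
  obtain ⟨u, rfl⟩ := Multiset.le_iff_exists_add.mp h
  rw [Multiset.sum_add]
  omega

lemma countP_multiset_range (n : ℕ) (q : ℕ → Prop) [DecidablePred q] :
    (Multiset.range n).countP q = ((Finset.range n).filter q).card := by
  rw [Multiset.countP_eq_card_filter]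
  rfl

lemma col_transpose (s : Multiset ℕ) (i : ℕ) : col (transpose s) i = row s i := by
  rw [transpose_eq, col, Multiset.countP_filter, Multiset.countP_map, row]
  have hrfl : ((Finset.range s.sum).filter (fun c => i + 1 ≤ col s c)).card
      = Multiset.card (Multiset.filter (fun c => i + 1 ≤ col s c) (Multiset.range s.sum)) := rfl
  rw [hrfl]
  congr 1
  apply Multiset.filter_congr
  intro c _
  exact ⟨fun ⟨h1, _⟩ => h1, fun h1 => ⟨h1, by omega⟩⟩

lemma row_transpose {s : Multiset ℕ} (hs : 0 ∉ s) (c : ℕ) : row (transpose s) c = col s c := by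
  rw [row, transpose_sum]
  have : ∀ i, col (transpose s) i = row s i := col_transpose s
  calc ((Finset.range s.sum).filter (fun i => c + 1 ≤ col (transpose s) i)).card
      = ((Finset.range s.sum).filter (fun i => c + 1 ≤ row s i)).card := by
        congr 1; apply Finset.filter_congr; intro i _; rw [this i]
    _ = col s c := (col_eq_card_row (card_le_sum hs)).symm

lemma psum_transpose {s : Multiset ℕ} (hs : 0 ∉ s) (k : ℕ) :
    psum (transpose s) k = ∑ i ∈ Finset.range k, col s i := by
  rw [psum_eq_sum_row]
  apply Finset.sum_congr rfl
  intro i _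
  exact row_transpose hs i

lemma psum_tt {s : Multiset ℕ} (hs : 0 ∉ s) (k : ℕ) :
    psum (transpose (transpose s)) k = psum s k := by
  rw [psum_transpose (zero_notMem_transpose s), psum_eq_sum_row]
  apply Finset.sum_congr rfl
  intro i _
  exact col_transpose s i

/-! duality -/

lemma psum_add_psum_le {s : Multiset ℕ} (hs : 0 ∉ s) (k j : ℕ) :
    psum s k + psum (transpose s) j ≤ k * j + s.sum := by
  rcases le_or_gt s.sum j with h | h
  · have h1 : psum (transpose s) j ≤ s.sum := (transpose_sum s) ▸ psum_le_sum _ j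
    have h2 : psum s k ≤ k * j := by
      rcases Nat.eq_zero_or_pos k with rfl | hk
      · simp [psum_zero]
      · calc psum s k ≤ s.sum := psum_le_sum s k
          _ ≤ j := h
          _ ≤ k * j := Nat.le_mul_of_pos_left j hk
    omega
  · rw [psum_eq_sum_col, psum_transpose hs]
    have hsplit : ∑ c ∈ Finset.range s.sum, min k (col s c)
        = ∑ c ∈ Finset.range j, min k (col s c)
          + ∑ c ∈ Finset.Ico j s.sum, min k (col s c) := sum_split _ (le_of_lt h)
    rw [hsplit]
    have h1 : ∑ c ∈ Finset.range j, min k (col s c) ≤ k * j := by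
      calc ∑ c ∈ Finset.range j, min k (col s c) ≤ ∑ _c ∈ Finset.range j, k :=
        Finset.sum_le_sum (fun c _ => min_le_left _ _)
      _ = k * j := by rw [Finset.sum_const, Finset.card_range]; ring
    have h2 : ∑ c ∈ Finset.Ico j s.sum, min k (col s c) + ∑ c ∈ Finset.range j, col s c
        ≤ s.sum := by
      have h3 : ∑ c ∈ Finset.range j, col s c + ∑ c ∈ Finset.Ico j s.sum, col s c = s.sum := by
        rw [← sum_split _ (le_of_lt h)]; exact sum_col_all s le_rfl
      have hle : ∑ c ∈ Finset.Ico j s.sum, min k (col s c) ≤ ∑ c ∈ Finset.Ico j s.sum, col s c :=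
        Finset.sum_le_sum (fun c _ => min_le_right _ _)
      omega
    omega

lemma psum_add_psum_witness {s : Multiset ℕ} (hs : 0 ∉ s) (k : ℕ) :
    psum s k + psum (transpose s) (row s k) = k * row s k + s.sum := by
  set j := row s k with hj
  have hjN : j ≤ s.sum := row_le_sum s k
  rw [psum_eq_sum_col, psum_transpose hs]
  have hsplit : ∑ c ∈ Finset.range s.sum, min k (col s c)
      = ∑ c ∈ Finset.range j, min k (col s c)
        + ∑ c ∈ Finset.Ico j s.sum, min k (col s c) := sum_split _ hjN
  have h1 : ∑ c ∈ Finset.range j, min k (col s c) = k * j := by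
    have : ∀ c ∈ Finset.range j, min k (col s c) = k := by
      intro c hc
      simp only [Finset.mem_range] at hc
      have : k + 1 ≤ col s c := galois.mp (by omega)
      omega
    rw [Finset.sum_congr rfl this, Finset.sum_const, Finset.card_range]; ring
  have h2 : ∀ c ∈ Finset.Ico j s.sum, min k (col s c) = col s c := by
    intro c hc
    simp only [Finset.mem_Ico] at hc
    have : ¬ (k + 1 ≤ col s c) := by
      intro hcon
      have := galois.mpr hcon
      omega
    omega
  have h3 : ∑ c ∈ Finset.range j, col s c + ∑ c ∈ Finset.Ico j s.sum, col s c = s.sum := by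
    rw [← sum_split _ hjN]; exact sum_col_all s le_rfl
  have h2' : ∑ c ∈ Finset.Ico j s.sum, min k (col s c) = ∑ c ∈ Finset.Ico j s.sum, col s c :=
    Finset.sum_congr rfl h2
  rw [hsplit, h1, h2']
  omega

/-- duality, assuming equal sums. -/
lemma domle_transpose' {a b : Multiset ℕ} (ha : 0 ∉ a) (hb : 0 ∉ b) (hsum : b.sum = a.sum)
    (h : DomLE a b) : DomLE (transpose b) (transpose a) := by
  intro j
  have hW := psum_add_psum_witness (zero_notMem_transpose a) j
  rw [psum_tt ha, transpose_sum] at hW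
  set k₀ := row (transpose a) j with hk
  have hL := psum_add_psum_le hb k₀ j
  have hab := h k₀
  rw [hsum] at hL
  have : psum (transpose b) j + psum a k₀ ≤ j * k₀ + a.sum := by
    calc psum (transpose b) j + psum a k₀ ≤ psum (transpose b) j + psum b k₀ := by omega
    _ = psum b k₀ + psum (transpose b) j := by ring
    _ ≤ k₀ * j + a.sum := hL
    _ = j * k₀ + a.sum := by ring
  omega

/-! ## Section C : parity -/

lemma sum_parity (s : Multiset ℕ) : s.sum % 2 = (s.countP (fun a => a % 2 = 1)) % 2 := by
  induction s using Multiset.induction_on with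
  | empty => simp
  | cons a t ih =>
    rw [Multiset.sum_cons, Multiset.countP_cons]
    split_ifs with h <;> omega

lemma countP_eq_sum_count (s : Multiset ℕ) (q : ℕ → Prop) [DecidablePred q]
    {B : ℕ} (hB : ∀ a ∈ s, a ≤ B) :
    s.countP q = ∑ u ∈ Finset.range (B+1), (if q u then s.count u else 0) := by
  induction s using Multiset.induction_on with
  | empty => simp
  | cons a t ih =>
    have hB' : ∀ x ∈ t, x ≤ B := fun x hx => hB x (Multiset.mem_cons_of_mem hx)
    rw [Multiset.countP_cons, ih hB']
    have hsingle : ∑ u ∈ Finset.range (B+1), (if q u then (if u = a then 1 else 0) else 0)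
        = if q a then 1 else 0 := by
      rw [Finset.sum_eq_single a]
      · simp
      · intro u _ hu
        simp [hu]
      · intro hnot
        exfalso
        apply hnot
        simp only [Finset.mem_range]
        have := hB a (Multiset.mem_cons_self a t)
        omega
    calc ∑ u ∈ Finset.range (B+1), (if q u then t.count u else 0) + (if q a then 1 else 0)
        = ∑ u ∈ Finset.range (B+1), ((if q u then t.count u else 0)
            + (if q u then (if u = a then 1 else 0) else 0)) := by
          rw [Finset.sum_add_distrib, hsingle]
      _ = _ := by
          apply Finset.sum_congr rfl
          intro u _
          rw [Multiset.count_cons]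
          split_ifs <;> omega

lemma even_countP_of_orth {s : Multiset ℕ} (hs : IsOrthogonal s)
    (q : ℕ → Prop) [DecidablePred q] (hq : ∀ a, q a → Even a) :
    Even (s.countP q) := by
  rw [countP_eq_sum_count s q (B := s.sum) (fun a ha => mem_le_sum ha)]
  rw [even_iff_two_dvd]
  apply Finset.dvd_sum
  intro u hu
  split_ifs with h
  · exact (hs u (hq u h)).two_dvd
  · exact dvd_zero 2

/-- `psum` at a column-count position equals a filtered sum. -/
lemma psum_col_eq_filter_sum (s : Multiset ℕ) {v : ℕ} (hv : 1 ≤ v) :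
    psum s (col s (v-1)) = (s.filter (fun a => v ≤ a)).sum := by
  set k := col s (v-1) with hkdef
  -- filter sum via columns
  have hfs : (s.filter (fun a => v ≤ a)).sum
      = ∑ c ∈ Finset.range s.sum, col (s.filter (fun a => v ≤ a)) c := by
    rw [sum_col_all]
    exact sum_le_of_le (Multiset.filter_le _ s)
  have hcolf : ∀ c, col (s.filter (fun a => v ≤ a)) c = if c + 1 ≤ v then k else col s c := by
    intro c
    rw [col, Multiset.countP_filter]
    split_ifs with h
    · rw [hkdef, col]
      congr 1
      ext a
      constructor
      · intro ⟨_, h2⟩; omega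
      · intro h1; constructor <;> omega
    · rw [col]
      congr 1
      ext a
      constructor
      · intro ⟨h1, _⟩; exact h1
      · intro h1; constructor <;> omega
  rw [psum_eq_sum_col, hfs]
  apply Finset.sum_congr rfl
  intro c _
  rw [hcolf c]
  split_ifs with h
  · -- c + 1 ≤ v : col s c ≥ col s (v-1) = k
    have : k ≤ col s c := col_mono (by omega)
    omega
  · -- c ≥ v : col s c ≤ k
    have : col s c ≤ k := col_mono (by omega)
    omega

/-- corner parity: at a corner of an orthogonal partition, `psum ≡ position (mod 2)`. -/
lemma corner_parity {s : Multiset ℕ} (hs : IsOrthogonal s) {i : ℕ}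
    (h : row s (i+1) < row s i) : (psum s (i+1) + (i+1)) % 2 = 0 := by
  set v := row s i with hv
  have hv1 : 1 ≤ v := by omega
  have hcol : col s (v-1) = i + 1 := by
    have h1 : i + 1 ≤ col s (v-1) := galois.mp (by omega)
    have h2 : ¬ (i + 2 ≤ col s (v-1)) := by
      intro hcon
      have := galois.mpr hcon
      omega
    omega
  have hps : psum s (i+1) = (s.filter (fun a => v ≤ a)).sum := by
    rw [← hcol]
    exact psum_col_eq_filter_sum s hv1
  have hcard : Multiset.card (s.filter (fun a => v ≤ a)) = i + 1 := by
    rw [← hcol, col, Multiset.countP_eq_card_filter]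
    congr 1
    apply Multiset.filter_congr
    intro a _
    constructor <;> intro <;> omega
  set f := s.filter (fun a => v ≤ a) with hf
  have hsump := sum_parity f
  have hsplit : f.countP (fun a => a % 2 = 1) + f.countP (fun a => a % 2 = 0)
      = Multiset.card f := by
    induction f using Multiset.induction_on with
    | empty => simp
    | cons a t ih =>
      rw [Multiset.countP_cons, Multiset.countP_cons, Multiset.card_cons]
      split_ifs with h1 h2 <;> omega
  have heven : Even (f.countP (fun a => a % 2 = 0)) := by
    rw [hf, Multiset.countP_filter]
    exact even_countP_of_orth hs _ (fun a ⟨h1, _⟩ => Nat.even_iff.mpr h1)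
  rw [hps]
  rw [Nat.even_iff] at heven
  omega

end CAux

namespace CAux

/-! ## orthogonality from corner parity -/

lemma psum_run (s : Multiset ℕ) {u w v : ℕ} (huw : u ≤ w)
    (hrun : ∀ t, u ≤ t → t < w → row s t = v) :
    psum s w = psum s u + (w - u) * v := by
  rw [psum_eq_sum_row, psum_eq_sum_row, sum_split _ huw]
  have h1 : ∀ t ∈ Finset.Ico u w, row s t = v := fun t ht => by
    simp only [Finset.mem_Ico] at ht
    exact hrun t ht.1 ht.2
  rw [Finset.sum_congr rfl h1, Finset.sum_const, Nat.card_Ico]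
  simp [mul_comm]

lemma mul_mod2 (x y : ℕ) : (x * y) % 2 = ((x % 2) * (y % 2)) % 2 := Nat.mul_mod x y 2

lemma corner_parity' {s : Multiset ℕ} (hs : IsOrthogonal s) {x : ℕ} (hx : 1 ≤ x)
    (hc : row s x < row s (x-1)) : (psum s x + x) % 2 = 0 := by
  obtain ⟨x', rfl⟩ : ∃ x', x = x' + 1 := ⟨x - 1, by omega⟩
  exact corner_parity hs (by simpa using hc)

lemma orth_of_corner_parity {s : Multiset ℕ} (hs : 0 ∉ s)
    (h : ∀ i, row s (i+1) < row s i → (psum s (i+1) + (i+1)) % 2 = 0) :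
    IsOrthogonal s := by
  have h' : ∀ x, 1 ≤ x → row s x < row s (x-1) → (psum s x + x) % 2 = 0 := by
    intro x hx hc
    obtain ⟨x', rfl⟩ : ∃ x', x = x' + 1 := ⟨x - 1, by omega⟩
    exact h x' (by simpa using hc)
  intro v hv
  rcases Nat.eq_zero_or_pos v with rfl | hv1
  · rw [Multiset.count_eq_zero_of_notMem hs]; exact Even.zero
  have hcount : s.count v + col s v = col s (v-1) := count_eq_col_sub hv1
  have huw : col s v ≤ col s (v-1) := col_mono (by omega)
  rcases eq_or_lt_of_le huw with heq | hlt
  · have : s.count v = 0 := by omega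
    rw [this]; exact Even.zero
  have hrun : ∀ t, col s v ≤ t → t < col s (v-1) → row s t = v := by
    intro t ht1 ht2
    have h1 : v ≤ row s t := by
      have := galois.mpr (show t + 1 ≤ col s (v-1) by omega)
      omega
    have h2 : ¬ (v + 1 ≤ row s t) := fun hcon => by
      have := galois.mp hcon
      omega
    omega
  have hpw : psum s (col s (v-1)) = psum s (col s v) + (col s (v-1) - col s v) * v :=
    psum_run s huw hrun
  have hcw : row s (col s (v-1)) < row s (col s (v-1) - 1) := by
    have hge : v ≤ row s (col s (v-1) - 1) := by
      have := galois.mpr (show (col s (v-1) - 1) + 1 ≤ col s (v-1) by omega)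
      omega
    have hlt2 : ¬ (v ≤ row s (col s (v-1))) := fun hcon => by
      have := galois.mp (show (v-1) + 1 ≤ row s (col s (v-1)) by omega)
      omega
    omega
  have hparw := h' (col s (v-1)) (by omega) hcw
  have hparu : (psum s (col s v) + col s v) % 2 = 0 := by
    rcases Nat.eq_zero_or_pos (col s v) with hz | hpos
    · rw [hz, psum_zero]
    · have hge : v + 1 ≤ row s (col s v - 1) := by
        have := galois.mpr (show (col s v - 1) + 1 ≤ col s v by omega)
        omega
      have hlt2 : row s (col s v) = v := hrun _ le_rfl hlt
      exact h' (col s v) hpos (by omega)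
  have hvmod : v % 2 = 0 := Nat.even_iff.mp hv
  have hmul : (col s (v-1) - col s v) * v % 2 = 0 := by
    rw [mul_mod2, hvmod]
    simp
  rw [Nat.even_iff]
  omega

lemma row_mem {s : Multiset ℕ} {i : ℕ} (h : 1 ≤ row s i) : row s i ∈ s := by
  set v := row s i with hv
  have h1 : i + 1 ≤ col s (v-1) := galois.mp (by omega)
  have h2 : ¬ (i + 1 ≤ col s v) := fun hcon => by
    have := galois.mpr hcon
    omega
  have hcount := count_eq_col_sub (s := s) (v := v) (by omega)
  rw [← Multiset.count_pos]
  omega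

/-! ## Section D : the general orthogonal collapse -/

def Par (U : Multiset ℕ) (k : ℕ) : Prop := (psum U k + k) % 2 = 0

def Flat (U : Multiset ℕ) (a b : ℕ) : Prop := ∀ i, a ≤ i → i ≤ b → row U i = row U a

def E (U : Multiset ℕ) (k : ℕ) : Prop :=
  1 ≤ k ∧ ∀ j, k - 1 ≤ j → Flat U (k-1) j → ¬ Par U (j+1)

open Classical in
noncomputable def eps (U : Multiset ℕ) (k : ℕ) : ℕ := if E U k then 1 else 0

lemma eps_le_one (U : Multiset ℕ) (k : ℕ) : eps U k ≤ 1 := by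
  rw [eps]; split_ifs <;> omega

lemma eps_zero (U : Multiset ℕ) : eps U 0 = 0 := by
  rw [eps, if_neg]
  intro ⟨h, _⟩
  omega

lemma E_succ_iff (U : Multiset ℕ) (k : ℕ) :
    E U (k+1) ↔ ∀ j, k ≤ j → Flat U k j → ¬ Par U (j+1) := by
  constructor
  · intro ⟨_, h⟩ j hj hf
    exact h j (by omega) (by simpa using hf)
  · intro h
    exact ⟨by omega, fun j hj hf => h j (by omega) (by simpa using hf)⟩

lemma eps_one_iff (U : Multiset ℕ) (k : ℕ) : eps U k = 1 ↔ E U k := by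
  rw [eps]; split_ifs with h <;> simp [h]

lemma eps_zero_iff (U : Multiset ℕ) (k : ℕ) : eps U k = 0 ↔ ¬ E U k := by
  rw [eps]; split_ifs with h <;> simp [h]

lemma flat_refl (U : Multiset ℕ) (a : ℕ) : Flat U a a := by
  intro i h1 h2
  have : i = a := by omega
  rw [this]

/-- `psum` along a flat run. -/
lemma psum_flat {U : Multiset ℕ} {a j : ℕ} (haj : a ≤ j) (h : Flat U a j) :
    psum U (j+1) = psum U a + (j + 1 - a) * row U a :=
  psum_run U (by omega) (fun t ht1 ht2 => h t ht1 (by omega))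

/-- if `E U (k+1)` then `row U k ≥ 1`. -/
lemma E_row_pos {U : Multiset ℕ} (hU : 0 ∉ U) {k : ℕ} (h : E U (k+1)) : 1 ≤ row U k := by
  by_contra hc
  have hrow : row U k = 0 := by omega
  have hflat : ∀ j, k ≤ j → Flat U k j := by
    intro j _ i hi _
    have := row_mono (s := U) hi
    omega
  have hcard : Multiset.card U ≤ U.sum := card_le_sum hU
  set K := Multiset.card U + k with hK
  set j := K + (U.sum + K + 1) % 2 with hj
  have hjk : k ≤ j := by omega
  have hpj : psum U (j+1) = U.sum := psum_card U (by omega)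
  have := (E_succ_iff U k).mp h j hjk (hflat j hjk)
  simp only [Par, hpj] at this
  omega

lemma eps_le_row {U : Multiset ℕ} (hU : 0 ∉ U) (i : ℕ) : eps U (i+1) ≤ row U i := by
  rcases Nat.eq_zero_or_pos (eps U (i+1)) with h | h
  · omega
  · have : eps U (i+1) = 1 := by have := eps_le_one U (i+1); omega
    have := E_row_pos hU ((eps_one_iff U (i+1)).mp this)
    omega

noncomputable def crow (U : Multiset ℕ) (i : ℕ) : ℕ := row U i + eps U i - eps U (i+1)

lemma crow_add {U : Multiset ℕ} (hU : 0 ∉ U) (i : ℕ) :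
    crow U i + eps U (i+1) = row U i + eps U i := by
  have := eps_le_row hU i
  rw [crow]
  omega

lemma E_not_par {U : Multiset ℕ} {k : ℕ} (h : E U (k+1)) : ¬ Par U (k+1) :=
  (E_succ_iff U k).mp h k le_rfl (flat_refl U k)

/-- H7 : propagation of the correction to the right. -/
lemma E_next {U : Multiset ℕ} {i : ℕ} (h : E U (i+1)) (hodd : row U (i+1) % 2 = 1) :
    E U (i+2) := by
  rw [E_succ_iff]
  intro j hj hf hpar
  have hps : psum U (j+1) = psum U (i+1) + (j + 1 - (i+1)) * row U (i+1) :=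
    psum_flat hj hf
  have hnp := E_not_par h
  simp only [Par] at hpar hnp
  rw [hps] at hpar
  have hmul : (j + 1 - (i+1)) * row U (i+1) % 2 = (j - i) % 2 := by
    rw [mul_mod2, hodd]
    have : j + 1 - (i + 1) = j - i := by omega
    rw [this]
    omega
  omega

/-- H5 : propagation of the correction to the left. -/
lemma E_prev {U : Multiset ℕ} {i : ℕ} (hi : 1 ≤ i) (h : E U (i+1))
    (hodd : row U i % 2 = 1) : E U i := by
  have hnp := E_not_par h
  constructor
  · omega
  intro j hj hf hpar
  rcases eq_or_lt_of_le hj with heq | hlt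
  · -- j = i - 1 : show ¬ Par U i
    have hji : j + 1 = i := by omega
    simp only [Par] at hpar hnp
    have hstep : psum U (i+1) = psum U i + row U i := psum_succ U i
    rw [hji] at hpar
    omega
  · -- j ≥ i : flat from i-1 extends; use E at i+1
    have hrow : row U i = row U (i-1) := hf i (by omega) (by omega)
    have hflat : Flat U i j := by
      intro t ht1 ht2
      rw [hf t (by omega) ht2, ← hrow]
    exact (E_succ_iff U i).mp h j (by omega) hflat hpar

/-- KEY inequality for antitonicity of the corrected rows. -/
lemma key1 {U : Multiset ℕ} (hU : 0 ∉ U) (i : ℕ) :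
    row U (i+1) + 2 * eps U (i+1) ≤ row U i + eps U i + eps U (i+2) := by
  have hmono : row U (i+1) ≤ row U i := row_mono (by omega)
  rcases Nat.eq_zero_or_pos (eps U (i+1)) with h0 | hpos
  · omega
  have he1 : eps U (i+1) = 1 := by have := eps_le_one U (i+1); omega
  have hE : E U (i+1) := (eps_one_iff U (i+1)).mp he1
  have hnp := E_not_par hE
  have hstep1 : psum U (i+1) = psum U i + row U i := psum_succ U i
  have hstep2 : psum U (i+2) = psum U (i+1) + row U (i+1) := psum_succ U (i+1)
  rcases eq_or_lt_of_le hmono with heq | hlt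
  · -- flat case : row U (i+1) = row U i
    have hflat2 : Flat U i (i+1) := by
      intro t ht1 ht2
      rcases Nat.eq_or_lt_of_le ht1 with h | h
      · rw [← h]
      · have : t = i + 1 := by omega
        rw [this, heq]
    have hnp2 : ¬ Par U (i+2) := (E_succ_iff U i).mp hE (i+1) (by omega) hflat2
    have hodd : row U i % 2 = 1 := by
      simp only [Par] at hnp hnp2
      omega
    have heps2 : eps U (i+2) = 1 :=
      (eps_one_iff U (i+2)).mpr (E_next hE (by omega))
    rcases Nat.eq_zero_or_pos i with rfl | hi
    · -- i = 0 : contradiction, since Par U 1 holds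
      exfalso
      apply hnp
      simp only [Par]
      rw [psum_succ, psum_zero]
      omega
    · have hepsi : eps U i = 1 := (eps_one_iff U i).mpr (E_prev hi hE hodd)
      omega
  · -- corner case
    rcases le_or_gt (row U (i+1) + 2) (row U i) with hbig | hsmall
    · have := eps_le_one U i
      have := eps_le_one U (i+2)
      omega
    have heq1 : row U i = row U (i+1) + 1 := by omega
    rcases Nat.even_or_odd (row U (i+1)) with hev | hod
    · -- row U (i+1) even, so row U i odd
      have hoddi : row U i % 2 = 1 := by
        rw [Nat.even_iff] at hev
        omega
      rcases Nat.eq_zero_or_pos i with rfl | hi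
      · -- i = 0 : ¬ Par U 1 means row U 0 even, contradiction
        exfalso
        apply hnp
        simp only [Par]
        rw [psum_succ, psum_zero]
        omega
      · have hepsi : eps U i = 1 := (eps_one_iff U i).mpr (E_prev hi hE hoddi)
        have := eps_le_one U (i+2)
        omega
    · have heps2 : eps U (i+2) = 1 :=
        (eps_one_iff U (i+2)).mpr (E_next hE (Nat.odd_iff.mp hod))
      have := eps_le_one U i
      omega

lemma crow_anti {U : Multiset ℕ} (hU : 0 ∉ U) : ∀ {i j : ℕ}, i ≤ j → crow U j ≤ crow U i := by
  have hsucc : ∀ i, crow U (i+1) ≤ crow U i := by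
    intro i
    have h1 := crow_add hU i
    have h2 := crow_add hU (i+1)
    rw [show i+1+1 = i+2 from rfl] at h2
    have h3 := key1 hU i
    have := eps_le_one U (i+1)
    have := eps_le_one U (i+2)
    omega
  intro i j h
  induction j, h using Nat.le_induction with
  | base => exact le_rfl
  | succ n hn ih => exact le_trans (hsucc n) ih

end CAux

namespace CAux

/-! ## realization of an antitone row sequence as a partition -/

def mkPart (f : ℕ → ℕ) (B : ℕ) : Multiset ℕ := ((Multiset.range B).map f).filter (0 < ·)

lemma mk_zero (f : ℕ → ℕ) (B : ℕ) : 0 ∉ mkPart f B := by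
  intro h
  have := Multiset.of_mem_filter h
  omega

lemma mk_sum (f : ℕ → ℕ) (B : ℕ) : (mkPart f B).sum = ∑ i ∈ Finset.range B, f i := by
  rw [mkPart, sum_filter_pos, multiset_range_sum]

lemma mk_col (f : ℕ → ℕ) (B c : ℕ) :
    col (mkPart f B) c = ((Finset.range B).filter (fun i => c + 1 ≤ f i)).card := by
  rw [col, mkPart, Multiset.countP_filter, Multiset.countP_map]
  have hrfl : ((Finset.range B).filter (fun i => c + 1 ≤ f i)).card
      = Multiset.card (Multiset.filter (fun i => c + 1 ≤ f i) (Multiset.range B)) := rfl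
  rw [hrfl]
  congr 1
  apply Multiset.filter_congr
  intro i _
  exact ⟨fun ⟨h1, _⟩ => h1, fun h1 => ⟨h1, by omega⟩⟩

variable {f : ℕ → ℕ} {B : ℕ}

lemma mk_row (hf : ∀ {i j : ℕ}, i ≤ j → f j ≤ f i) (hsupp : ∀ i, B ≤ i → f i = 0)
    (i : ℕ) : row (mkPart f B) i = f i := by
  have hcol_iff : ∀ c, i + 1 ≤ col (mkPart f B) c ↔ c + 1 ≤ f i := by
    intro c
    rw [mk_col]
    constructor
    · intro h
      by_contra hc
      have hsub : (Finset.range B).filter (fun i' => c + 1 ≤ f i') ⊆ Finset.range i := by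
        intro i' hi'
        simp only [Finset.mem_filter, Finset.mem_range] at hi' ⊢
        by_contra hge
        have := hf (show i ≤ i' by omega)
        omega
      have := Finset.card_le_card hsub
      simp only [Finset.card_range] at this
      omega
    · intro h
      have hsub : Finset.range (i+1) ⊆ (Finset.range B).filter (fun i' => c + 1 ≤ f i') := by
        intro i' hi'
        simp only [Finset.mem_range] at hi'
        have h1 : c + 1 ≤ f i' := le_trans h (hf (by omega))
        have h2 : i' < B := by
          by_contra hge
          rw [hsupp i' (by omega)] at h1
          omega
        simp only [Finset.mem_filter, Finset.mem_range]
        exact ⟨h2, h1⟩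
      have := Finset.card_le_card hsub
      simpa using this
  rw [row]
  have hset : (Finset.range (mkPart f B).sum).filter (fun c => i + 1 ≤ col (mkPart f B) c)
      = Finset.range (min (f i) (mkPart f B).sum) := by
    ext c
    simp only [Finset.mem_filter, Finset.mem_range, lt_min_iff]
    constructor
    · intro ⟨h1, h2⟩
      have := (hcol_iff c).mp h2
      omega
    · intro ⟨h1, h2⟩
      exact ⟨h2, (hcol_iff c).mpr (by omega)⟩
  rw [hset, Finset.card_range]
  rcases Nat.eq_zero_or_pos (f i) with h0 | hpos
  · omega
  · have hiB : i < B := by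
      by_contra hge
      rw [hsupp i (by omega)] at hpos
      omega
    have : f i ≤ (mkPart f B).sum := by
      rw [mk_sum]
      exact Finset.single_le_sum (fun _ _ => Nat.zero_le _) (Finset.mem_range.mpr hiB)
    omega

lemma mk_psum (hf : ∀ {i j : ℕ}, i ≤ j → f j ≤ f i) (hsupp : ∀ i, B ≤ i → f i = 0)
    (k : ℕ) : psum (mkPart f B) k = ∑ i ∈ Finset.range k, f i := by
  rw [psum_eq_sum_row]
  exact Finset.sum_congr rfl (fun i _ => mk_row hf hsupp i)

/-! ## the collapse -/

noncomputable def gcoll (U : Multiset ℕ) : Multiset ℕ := mkPart (crow U) (U.sum + 1)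

lemma crow_supp {U : Multiset ℕ} (hU : 0 ∉ U) : ∀ i, U.sum + 1 ≤ i → crow U i = 0 := by
  intro i hi
  have hcard := card_le_sum hU
  have hrow : row U i = 0 := row_eq_zero (by omega)
  have h1 : eps U (i+1) = 0 := by
    have := eps_le_row hU i
    omega
  obtain ⟨i', rfl⟩ : ∃ i', i = i' + 1 := ⟨i - 1, by omega⟩
  have hrow' : row U i' = 0 := row_eq_zero (by omega)
  have h2 : eps U (i'+1) = 0 := by
    have := eps_le_row hU i'
    omega
  rw [crow, hrow, h2, h1]

lemma gcoll_zero (U : Multiset ℕ) : 0 ∉ gcoll U := mk_zero _ _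

lemma gcoll_row {U : Multiset ℕ} (hU : 0 ∉ U) (i : ℕ) : row (gcoll U) i = crow U i :=
  mk_row (fun h => crow_anti hU h) (crow_supp hU) i

lemma gcoll_psum {U : Multiset ℕ} (hU : 0 ∉ U) (k : ℕ) :
    psum (gcoll U) k + eps U k = psum U k := by
  induction k with
  | zero => rw [psum_zero, psum_zero, eps_zero]
  | succ k ih =>
    have h1 := psum_succ (gcoll U) k
    have h2 := psum_succ U k
    have h3 := gcoll_row hU k
    have h4 := crow_add hU k
    omega

lemma gcoll_sum {U : Multiset ℕ} (hU : 0 ∉ U) : (gcoll U).sum = U.sum := by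
  have hcard := card_le_sum hU
  have hcardg : Multiset.card (gcoll U) ≤ U.sum + 1 := by
    rw [gcoll, mkPart]
    calc Multiset.card (Multiset.filter _ _) ≤ Multiset.card ((Multiset.range (U.sum+1)).map (crow U)) :=
      Multiset.card_le_card (Multiset.filter_le _ _)
    _ = U.sum + 1 := by rw [Multiset.card_map, Multiset.card_range]
  have h1 : psum (gcoll U) (U.sum + 1) = (gcoll U).sum := psum_card _ hcardg
  have h2 : psum U (U.sum + 1) = U.sum := psum_card _ (by omega)
  have h3 : eps U (U.sum + 1) = 0 := by
    have h4 : row U (U.sum) = 0 := row_eq_zero (by omega)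
    have := eps_le_row hU (U.sum)
    omega
  have := gcoll_psum hU (U.sum + 1)
  omega

lemma gcoll_domle {U : Multiset ℕ} (hU : 0 ∉ U) : DomLE (gcoll U) U := by
  intro k
  have := gcoll_psum hU k
  omega

lemma gcoll_orth {U : Multiset ℕ} (hU : 0 ∉ U) : IsOrthogonal (gcoll U) := by
  apply orth_of_corner_parity (gcoll_zero U)
  intro i hcorner
  have hps := gcoll_psum hU (i+1)
  have hdomk := gcoll_domle hU (i+1)
  rcases Nat.eq_zero_or_pos (eps U (i+1)) with h0 | hpos
  · -- no correction at i+1 : find the parity witness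
    have hnE : ¬ E U (i+1) := (eps_zero_iff _ _).mp h0
    rw [E_succ_iff] at hnE
    push_neg at hnE
    obtain ⟨j, hj, hfl, hpar⟩ := hnE
    simp only [Par] at hpar
    rcases eq_or_lt_of_le hj with heq | hlt
    · rw [← heq] at hpar
      omega
    · -- j > i : deduce flatness at i, i+1 and eps values
      have hflat1 : row U (i+1) = row U i := hfl (i+1) (by omega) (by omega)
      have heps2 : eps U (i+2) = 0 := by
        rw [eps_zero_iff, E_succ_iff]
        push_neg
        refine ⟨j, by omega, ?_, by simp only [Par]; omega⟩
        intro t ht1 ht2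
        rw [hfl t (by omega) ht2, hflat1]
      -- compute the corner condition
      rw [gcoll_row hU, gcoll_row hU] at hcorner
      have hca := crow_add hU i
      have hcb := crow_add hU (i+1)
      rw [show i+1+1 = i+2 from rfl] at hcb
      have hepsi : eps U i = 1 := by
        have := eps_le_one U i
        omega
      -- i ≥ 1 since eps U 0 = 0
      rcases Nat.eq_zero_or_pos i with rfl | hi
      · rw [eps_zero] at hepsi; omega
      have hEi : E U i := (eps_one_iff U i).mp hepsi
      obtain ⟨i', rfl⟩ : ∃ i', i = i' + 1 := ⟨i - 1, by omega⟩
      rcases eq_or_lt_of_le (row_mono (s := U) (show i' ≤ i' + 1 by omega)) with hflA | hflB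
      · -- row U i' = row U (i'+1) : contradiction with E U (i'+1) and Par
        exfalso
        have hflat' : Flat U i' j := by
          intro t ht1 ht2
          rcases Nat.eq_or_lt_of_le ht1 with h | h
          · rw [← h]
          · rw [hfl t (by omega) ht2]; exact hflA
        exact (E_succ_iff U i').mp hEi j (by omega) hflat' (by simp only [Par]; omega)
      · -- strict corner above : ¬ Par U (i'+1)
        have hnpi : ¬ Par U ((i'+1)) := by
          have := (E_succ_iff U i').mp hEi i' le_rfl (flat_refl U i')
          simpa using this
        simp only [Par] at hnpi
        have hpsflat : psum U (j+1) = psum U (i'+1) + (j + 1 - (i'+1)) * row U (i'+1) :=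
          psum_flat (by omega) hfl
        have hstep : psum U (i'+1+1) = psum U (i'+1) + row U (i'+1) := psum_succ U (i'+1)
        rcases Nat.even_or_odd (row U (i'+1)) with hev | hod
        · have hv2 : row U (i'+1) % 2 = 0 := Nat.even_iff.mp hev
          have hmul : (j + 1 - (i'+1)) * row U (i'+1) % 2 = 0 := by
            rw [mul_mod2, hv2]; omega
          omega
        · have hv2 : row U (i'+1) % 2 = 1 := Nat.odd_iff.mp hod
          have hmul : (j + 1 - (i'+1)) * row U (i'+1) % 2 = (j + 1 - (i'+1)) % 2 := by
            rw [mul_mod2, hv2]; omega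
          omega
  · -- correction at i+1 : use ¬ Par
    have hE : E U (i+1) := (eps_one_iff U (i+1)).mp (by have := eps_le_one U (i+1); omega)
    have hnp := E_not_par hE
    simp only [Par] at hnp
    have h1 : eps U (i+1) = 1 := by have := eps_le_one U (i+1); omega
    omega

/-- propagation to a corner of `q` within a flat run of `U`. -/
lemma prop_corner {U q : Multiset ℕ} (hdom : DomLE q U) :
    ∀ n k', 1 ≤ row U k' → col U (row U k' - 1) ≤ k' + 1 + n →
      psum q (k'+1) = psum U (k'+1) →
      ∃ j, k' ≤ j ∧ Flat U k' j ∧ psum q (j+1) = psum U (j+1) ∧ row q (j+1) < row q j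
        ∧ (∀ t, k' ≤ t → t ≤ j → row q t = row q k') := by
  intro n
  induction n with
  | zero =>
    intro k' hv hcol heq
    rcases lt_or_ge (row q (k'+1)) (row q k') with hc | hc
    · exact ⟨k', le_rfl, flat_refl U k', heq, hc, fun t ht1 ht2 => by
        have : t = k' := by omega
        rw [this]⟩
    · exfalso
      have hq1 : row q (k'+1) = row q k' := le_antisymm (row_mono (by omega)) hc
      have hd1 := hdom k'
      have hd2 := hdom (k'+2)
      have hs1 := psum_succ q k'
      have hs2 := psum_succ U k'
      have hs3 := psum_succ q (k'+1)
      have hs4 := psum_succ U (k'+1)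
      rw [show k'+1+1 = k'+2 from rfl] at hs3 hs4
      have hm : row U (k'+1) ≤ row U k' := row_mono (by omega)
      -- row U (k'+1) = row U k'
      have hflatstep : row U (k'+1) = row U k' := by omega
      have : k' + 2 ≤ col U (row U k' - 1) := by
        have := galois.mp (show (row U k' - 1) + 1 ≤ row U (k'+1) by omega)
        omega
      omega
  | succ n ih =>
    intro k' hv hcol heq
    rcases lt_or_ge (row q (k'+1)) (row q k') with hc | hc
    · exact ⟨k', le_rfl, flat_refl U k', heq, hc, fun t ht1 ht2 => by
        have : t = k' := by omega
        rw [this]⟩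
    · have hq1 : row q (k'+1) = row q k' := le_antisymm (row_mono (by omega)) hc
      have hd1 := hdom k'
      have hd2 := hdom (k'+2)
      have hs1 := psum_succ q k'
      have hs2 := psum_succ U k'
      have hs3 := psum_succ q (k'+1)
      have hs4 := psum_succ U (k'+1)
      rw [show k'+1+1 = k'+2 from rfl] at hs3 hs4
      have hm : row U (k'+1) ≤ row U k' := row_mono (by omega)
      have hflatstep : row U (k'+1) = row U k' := by omega
      have heq2 : psum q (k'+1+1) = psum U (k'+1+1) := by
        rw [show k'+1+1 = k'+2 from rfl]
        omega
      obtain ⟨j, hj1, hfl, hj3, hj4, hqfl⟩ := ih (k'+1) (by omega)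
        (by rw [hflatstep]; omega) heq2
      refine ⟨j, by omega, ?_, hj3, hj4, ?_⟩
      · intro t ht1 ht2
        rcases Nat.eq_or_lt_of_le ht1 with h | h
        · rw [← h]
        · rw [hfl t (by omega) ht2, hflatstep]
      · intro t ht1 ht2
        rcases Nat.eq_or_lt_of_le ht1 with h | h
        · rw [← h]
        · rw [hqfl t (by omega) ht2, hq1]

lemma gcoll_max {N : ℕ} {U : Multiset ℕ} (hU : IsPartitionOf N U) :
    ∀ q, IsPartitionOf N q → IsOrthogonal q → DomLE q U → DomLE q (gcoll U) := by
  intro q _hq horth hdom k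
  have hps := gcoll_psum hU.2 k
  rcases Nat.eq_zero_or_pos (eps U k) with h0 | hpos
  · have := hdom k
    omega
  have h1 : eps U k = 1 := by have := eps_le_one U k; omega
  have hE0 : E U k := (eps_one_iff U k).mp h1
  have hk1 : 1 ≤ k := hE0.1
  obtain ⟨k', rfl⟩ : ∃ k', k = k' + 1 := ⟨k - 1, by omega⟩
  by_contra hcon
  push_neg at hcon
  have heq : psum q (k'+1) = psum U (k'+1) := by
    have := hdom (k'+1)
    omega
  have hv := E_row_pos hU.2 hE0
  obtain ⟨j, hj1, hfl, hj3, hj4, -⟩ :=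
    prop_corner hdom (col U (row U k' - 1)) k' hv (by omega) heq
  have hpar := corner_parity horth hj4
  have hnpar := (E_succ_iff U k').mp hE0 j hj1 hfl
  apply hnpar
  simp only [Par]
  omega

theorem gcoll_collapse {N : ℕ} {U : Multiset ℕ} (hU : IsPartitionOf N U) :
    IsCollapseOf IsOrthogonal N U (gcoll U) :=
  ⟨⟨(gcoll_sum hU.2).trans hU.1, gcoll_zero U⟩, gcoll_orth hU.2, gcoll_domle hU.2,
    gcoll_max hU⟩

end CAux

namespace CAux

/-! ## uniqueness and `choose` extraction -/

lemma collapse_unique {P : Multiset ℕ → Prop} {N : ℕ} {p q q' : Multiset ℕ}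
    (h1 : IsCollapseOf P N p q) (h2 : IsCollapseOf P N p q') : q = q' := by
  apply eq_of_psum_eq h1.1.2 h2.1.2
  intro k
  exact le_antisymm (h2.2.2.2 q h1.1 h1.2.1 h1.2.2.1 k) (h1.2.2.2 q' h2.1 h2.2.1 h2.2.2.1 k)

lemma expansion_unique {P Sp : Multiset ℕ → Prop} {N : ℕ} {p q q' : Multiset ℕ}
    (h1 : IsExpansionOf P Sp N p q) (h2 : IsExpansionOf P Sp N p q') : q = q' := by
  apply eq_of_psum_eq h1.1.2 h2.1.2
  intro k
  exact le_antisymm (h1.2.2.2.2 q' h2.1 h2.2.1 h2.2.2.1 h2.2.2.2.1 k)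
    (h2.2.2.2.2 q h1.1 h1.2.1 h1.2.2.1 h1.2.2.2.1 k)

lemma orthCollapse_eq {N : ℕ} {p y : Multiset ℕ} (h : IsCollapseOf IsOrthogonal N p y) :
    orthCollapse N p = y := by
  rw [orthCollapse, collapseOf, dif_pos ⟨y, h⟩]
  exact collapse_unique (Exists.choose_spec (⟨y, h⟩ : ∃ q, IsCollapseOf IsOrthogonal N p q)) h

lemma orthExpansion_eq {N : ℕ} {p y : Multiset ℕ}
    (h : IsExpansionOf IsOrthogonal (IsSpecialOrth N) N p y) :
    orthExpansion N p = y := by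
  rw [orthExpansion, expansionOf, dif_pos ⟨y, h⟩]
  exact expansion_unique
    (Exists.choose_spec (⟨y, h⟩ : ∃ q, IsExpansionOf IsOrthogonal (IsSpecialOrth N) N p q)) h

lemma transpose_partition {N : ℕ} {p : Multiset ℕ} (hp : IsPartitionOf N p) :
    IsPartitionOf N (transpose p) :=
  ⟨(transpose_sum p).trans hp.1, zero_notMem_transpose p⟩

lemma domle_of_psum_eq_left {a a' b : Multiset ℕ} (h : ∀ k, psum a k = psum a' k)
    (hd : DomLE a' b) : DomLE a b := fun k => (h k) ▸ hd k

/-! ## the double-collapse (specialness) argument -/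

lemma special_gcoll {N : ℕ} {z : Multiset ℕ} (hz : IsPartitionOf N z)
    (hzo : IsOrthogonal z) : IsSpecialOrth N (gcoll (transpose z)) := by
  have hTz := transpose_partition hz
  have certY := gcoll_collapse hTz
  set Y := gcoll (transpose z) with hY
  have hTY := transpose_partition certY.1
  have certW := gcoll_collapse hTY
  set W := gcoll (transpose Y) with hW
  have hTW := transpose_partition certW.1
  have certZ := gcoll_collapse hTW
  set Z := gcoll (transpose W) with hZ
  -- z ≤ transpose Y
  have hsum1 : (transpose z).sum = Y.sum := hTz.1.trans certY.1.1.symm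
  have h1 : DomLE (transpose (transpose z)) (transpose Y) :=
    domle_transpose' certY.1.2 hTz.2 hsum1 certY.2.2.1
  have hzY : DomLE z (transpose Y) :=
    domle_of_psum_eq_left (fun k => (psum_tt hz.2 k).symm) h1
  -- z ≤ W
  have hzW : DomLE z W := certW.2.2.2 z hz hzo hzY
  -- Z ≤ Y
  have hsum2 : W.sum = z.sum := certW.1.1.trans hz.1.symm
  have h2 : DomLE (transpose W) (transpose z) := domle_transpose' hz.2 certW.1.2 hsum2 hzW
  have hZY : DomLE Z Y :=
    certY.2.2.2 Z certZ.1 certZ.2.1 (fun k => le_trans (certZ.2.2.1 k) (h2 k))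
  -- Y ≤ Z
  have hsum3 : (transpose Y).sum = W.sum := hTY.1.trans certW.1.1.symm
  have h3 : DomLE (transpose (transpose Y)) (transpose W) :=
    domle_transpose' certW.1.2 hTY.2 hsum3 certW.2.2.1
  have hYW : DomLE Y (transpose W) :=
    domle_of_psum_eq_left (fun k => (psum_tt certY.1.2 k).symm) h3
  have hYZ : DomLE Y Z := certZ.2.2.2 Y certY.1 certY.2.1 hYW
  have hZeqY : Z = Y := eq_of_psum_eq certZ.1.2 certY.1.2
    (fun k => le_antisymm (hZY k) (hYZ k))
  rw [IsSpecialOrth, orthCollapse_eq certW, orthCollapse_eq certZ]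
  exact hZeqY

/-- extraction: a special orthogonal partition is the collapse of the transpose of an
orthogonal partition. -/
lemma special_extract {N : ℕ} {q : Multiset ℕ} (hN : 1 ≤ N) (hq : IsPartitionOf N q)
    (hsp : IsSpecialOrth N q) :
    ∃ z, IsPartitionOf N z ∧ IsOrthogonal z ∧ IsCollapseOf IsOrthogonal N (transpose z) q := by
  rw [IsSpecialOrth] at hsp
  have hpsq : 1 ≤ psum q (Multiset.card q) := by
    rw [psum_card q le_rfl, hq.1]
    exact hN
  by_cases h2 : ∃ c, IsCollapseOf IsOrthogonal N
      (transpose (orthCollapse N (transpose q))) c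
  · obtain ⟨c, hc⟩ := h2
    have houter : orthCollapse N (transpose (orthCollapse N (transpose q))) = c :=
      orthCollapse_eq hc
    have hcq : c = q := houter.symm.trans hsp
    rw [hcq] at hc
    by_cases h1 : ∃ c', IsCollapseOf IsOrthogonal N (transpose q) c'
    · obtain ⟨c', hc'⟩ := h1
      have hz0 : orthCollapse N (transpose q) = c' := orthCollapse_eq hc'
      rw [hz0] at hc
      exact ⟨c', hc'.1, hc'.2.1, hc⟩
    · exfalso
      have hz00 : orthCollapse N (transpose q) = 0 := by
        rw [orthCollapse, collapseOf, dif_neg h1]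
      rw [hz00] at hc
      have htz : transpose (0 : Multiset ℕ) = 0 := rfl
      rw [htz] at hc
      have hd := hc.2.2.1 (Multiset.card q)
      have h0 : psum (0 : Multiset ℕ) (Multiset.card q) = 0 := by
        rw [psum_eq_sum_row]
        apply Finset.sum_eq_zero
        intro i _
        rw [row, Finset.card_eq_zero, Finset.filter_eq_empty_iff]
        intro x _
        simp [col]
      omega
  · exfalso
    rw [orthCollapse, collapseOf, dif_neg h2] at hsp
    have : q.sum = 0 := by rw [← hsp]; rfl
    rw [hq.1] at this
    omega

end CAux

namespace CAux

/-! ## pairs parity for collapses of transposes of orthogonal partitions -/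

lemma col_zero_eq_card {s : Multiset ℕ} (hs : 0 ∉ s) : col s 0 = Multiset.card s := by
  rw [col, Multiset.countP_eq_card]
  intro a ha
  have : a ≠ 0 := fun h => hs (h ▸ ha)
  omega

lemma row_pos_of_lt_card {s : Multiset ℕ} (hs : 0 ∉ s) {i : ℕ}
    (h : i < Multiset.card s) : 1 ≤ row s i := by
  have := galois.mpr (show i + 1 ≤ col s 0 by rw [col_zero_eq_card hs]; omega)
  omega

lemma countP_min_odd (z : Multiset ℕ) {k : ℕ} (hk : k % 2 = 1) :
    z.countP (fun a => min a k % 2 = 1)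
      = z.countP (fun a => a % 2 = 1) + z.countP (fun a => a % 2 = 0 ∧ k ≤ a) := by
  induction z using Multiset.induction_on with
  | empty => simp
  | cons a t ih =>
    rw [Multiset.countP_cons, Multiset.countP_cons, Multiset.countP_cons]
    have : (if min a k % 2 = 1 then 1 else 0)
        = (if a % 2 = 1 then 1 else 0) + (if a % 2 = 0 ∧ k ≤ a then 1 else 0) := by
      split_ifs <;> omega
    omega

lemma tz_parity {N : ℕ} {z : Multiset ℕ} (hN : N % 2 = 0) (hz : IsPartitionOf N z)
    (hzo : IsOrthogonal z) {k : ℕ} (hk : k % 2 = 1) :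
    psum (transpose z) k % 2 = 0 := by
  rw [psum_transpose hz.2, sum_col_eq]
  have h1 := sum_parity (z.map (fun a => min a k))
  rw [Multiset.countP_map, ← Multiset.countP_eq_card_filter, countP_min_odd z hk] at h1
  have h3 : Even (z.countP (fun a => a % 2 = 0 ∧ k ≤ a)) :=
    even_countP_of_orth hzo _ (fun a ⟨h, _⟩ => Nat.even_iff.mpr h)
  have h4 := sum_parity z
  rw [hz.1] at h4
  rw [Nat.even_iff] at h3
  omega

/-! ### the box move -/

section BoxMove

variable {q : Multiset ℕ} {b : ℕ}

lemma col_cons (x : ℕ) (s : Multiset ℕ) (c : ℕ) :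
    col (x ::ₘ s) c = col s c + (if c + 1 ≤ x then 1 else 0) := by
  rw [col, col, Multiset.countP_cons]

lemma col_erase {s : Multiset ℕ} {v : ℕ} (h : v ∈ s) (c : ℕ) :
    col s c = col (s.erase v) c + (if c + 1 ≤ v then 1 else 0) := by
  have := col_cons v (s.erase v) c
  rw [Multiset.cons_erase h] at this
  exact this

/-- the box move: with `u = col q b`, `w = col q (b-1)`. -/
noncomputable def boxMove (q : Multiset ℕ) (b : ℕ) : Multiset ℕ :=
  (b+1) ::ₘ (b-1) ::ₘ ((q.erase b).erase b)

variable (hb2 : 2 ≤ b) (hc2 : 2 ≤ q.count b)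

include hb2 hc2

lemma bm_mem1 : b ∈ q := Multiset.count_pos.mp (by omega)

lemma bm_mem2 : b ∈ q.erase b := by
  rw [← Multiset.count_pos, Multiset.count_erase_self]
  omega

lemma bm_sum : (boxMove q b).sum = q.sum := by
  have h1 : q.sum = b + (q.erase b).sum := by
    conv_lhs => rw [← Multiset.cons_erase (bm_mem1 hb2 hc2)]
    rw [Multiset.sum_cons]
  have h2 : (q.erase b).sum = b + ((q.erase b).erase b).sum := by
    conv_lhs => rw [← Multiset.cons_erase (bm_mem2 hb2 hc2)]
    rw [Multiset.sum_cons]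
  rw [boxMove, Multiset.sum_cons, Multiset.sum_cons]
  omega

lemma bm_zero (hq : 0 ∉ q) : 0 ∉ boxMove q b := by
  rw [boxMove]
  intro h
  rcases Multiset.mem_cons.mp h with h | h
  · omega
  rcases Multiset.mem_cons.mp h with h | h
  · omega
  · exact hq (Multiset.mem_of_mem_erase (Multiset.mem_of_mem_erase h))

lemma bm_col (c : ℕ) :
    col (boxMove q b) c + 2 * (if c + 1 ≤ b then 1 else 0)
      = col q c + (if c + 1 ≤ b + 1 then 1 else 0) + (if c + 1 ≤ b - 1 then 1 else 0) := by
  have h1 := col_erase (bm_mem1 hb2 hc2) c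
  have h2 := col_erase (bm_mem2 hb2 hc2) c
  rw [boxMove, col_cons, col_cons]
  split_ifs at h1 h2 ⊢ <;> omega

lemma bm_col' (c : ℕ) :
    col (boxMove q b) c + (if c = b - 1 then 1 else 0)
      = col q c + (if c = b then 1 else 0) := by
  have h := bm_col hb2 hc2 (q := q) c
  split_ifs at h ⊢ <;> omega

lemma bm_count (v : ℕ) :
    (boxMove q b).count v + 2 * (if v = b then 1 else 0)
      = q.count v + (if v = b + 1 then 1 else 0) + (if v = b - 1 then 1 else 0) := by
  rw [boxMove, Multiset.count_cons, Multiset.count_cons]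
  by_cases h : v = b
  · subst h
    rw [Multiset.count_erase_self, Multiset.count_erase_self]
    split_ifs <;> omega
  · rw [Multiset.count_erase_of_ne h, Multiset.count_erase_of_ne h]
    split_ifs <;> omega

lemma bm_orth (hbe : b % 2 = 0) (horth : IsOrthogonal q) : IsOrthogonal (boxMove q b) := by
  intro v hv
  have hv2 : v % 2 = 0 := Nat.even_iff.mp hv
  have h1 := bm_count hb2 hc2 (q := q) v
  have h2 : v ≠ b + 1 := by omega
  have h3 : v ≠ b - 1 := by omega
  rw [if_neg h2, if_neg h3] at h1
  have h4 := horth v hv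
  rw [Nat.even_iff] at h4 ⊢
  by_cases h : v = b
  · rw [if_pos h] at h1
    omega
  · rw [if_neg h] at h1
    omega

lemma bm_blt (hq : 0 ∉ q) : b < q.sum := by
  have h1 : q.sum = b + (q.erase b).sum := by
    conv_lhs => rw [← Multiset.cons_erase (bm_mem1 hb2 hc2)]
    rw [Multiset.sum_cons]
  have h2 : (q.erase b).sum = b + ((q.erase b).erase b).sum := by
    conv_lhs => rw [← Multiset.cons_erase (bm_mem2 hb2 hc2)]
    rw [Multiset.sum_cons]
  omega

lemma bm_psum (hq : 0 ∉ q) (k : ℕ) :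
    psum (boxMove q b) k + min k (col q (b-1)) + min k (col q b)
      = psum q k + min k (col q (b-1) - 1) + min k (col q b + 1) := by
  have hbN : b < q.sum := bm_blt hb2 hc2 hq
  rw [psum_eq_sum_col, psum_eq_sum_col, bm_sum hb2 hc2]
  have hcolb : col (boxMove q b) b = col q b + 1 := by
    have h := bm_col' hb2 hc2 (q := q) b
    rw [if_neg (show ¬ b = b - 1 by omega), if_pos rfl] at h
    omega
  have hcolb1 : col (boxMove q b) (b-1) + 1 = col q (b-1) := by
    have h := bm_col' hb2 hc2 (q := q) (b-1)
    rw [if_pos rfl, if_neg (show ¬ b - 1 = b by omega)] at h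
    omega
  have hbmem : b ∈ Finset.range q.sum := Finset.mem_range.mpr hbN
  have hb1mem : b - 1 ∈ (Finset.range q.sum).erase b := by
    rw [Finset.mem_erase, Finset.mem_range]
    omega
  have hsplit : ∀ f : ℕ → ℕ,
      ∑ c ∈ Finset.range q.sum, f c
        = f b + (f (b-1) + ∑ c ∈ ((Finset.range q.sum).erase b).erase (b-1), f c) := by
    intro f
    rw [Finset.add_sum_erase _ f hb1mem, Finset.add_sum_erase _ f hbmem]
  rw [hsplit (fun c => min k (col (boxMove q b) c)), hsplit (fun c => min k (col q c))]
  have hsame : ∑ c ∈ ((Finset.range q.sum).erase b).erase (b-1),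
        min k (col (boxMove q b) c)
      = ∑ c ∈ ((Finset.range q.sum).erase b).erase (b-1), min k (col q c) := by
    apply Finset.sum_congr rfl
    intro c hc
    rw [Finset.mem_erase, Finset.mem_erase] at hc
    have := bm_col' hb2 hc2 (q := q) c
    rw [if_neg hc.1, if_neg hc.2.1] at this
    omega
  rw [hsame, hcolb]
  omega

end BoxMove

end CAux

namespace CAux

lemma pairs_step {N : ℕ} {z q : Multiset ℕ} (hN : N % 2 = 0) (hz : IsPartitionOf N z)
    (hzo : IsOrthogonal z) (hcert : IsCollapseOf IsOrthogonal N (transpose z) q)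
    (i : ℕ) (hpsum : psum q (2*i) % 2 = 0) :
    row q (2*i) % 2 = row q (2*i+1) % 2 := by
  obtain ⟨hqpart, horth, hdom, hmax⟩ := hcert
  by_contra hab
  have hba : row q (2*i+1) ≤ row q (2*i) := row_mono (by omega)
  have hlt : row q (2*i+1) < row q (2*i) :=
    lt_of_le_of_ne hba (fun h => hab (by rw [h]))
  have hs1 : psum q (2*i+1) = psum q (2*i) + row q (2*i) := psum_succ q (2*i)
  have hs2 : psum q (2*i+2) = psum q (2*i+1) + row q (2*i+1) := by
    have := psum_succ q (2*i+1)
    rw [show 2*i+1+1 = 2*i+2 from rfl] at this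
    exact this
  rcases Nat.even_or_odd (row q (2*i)) with hae | hao
  · have hcp := corner_parity horth (i := 2*i) hlt
    rw [Nat.even_iff] at hae
    omega
  have hae : row q (2*i) % 2 = 1 := Nat.odd_iff.mp hao
  have hbe : row q (2*i+1) % 2 = 0 := by omega
  rcases Nat.eq_zero_or_pos (row q (2*i+1)) with hb0 | hbpos
  · have hcard : Multiset.card q ≤ 2*i+1 := by
      by_contra hc
      have := row_pos_of_lt_card hqpart.2 (show 2*i+1 < Multiset.card q by omega)
      omega
    have hps : psum q (2*i+2) = N := by rw [psum_card q (by omega), hqpart.1]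
    omega
  have hb2' : 2 ≤ row q (2*i+1) := by omega
  have hbmem : row q (2*i+1) ∈ q := row_mem (by omega)
  obtain ⟨b, hbdef⟩ : ∃ b, row q (2*i+1) = b := ⟨_, rfl⟩
  rw [hbdef] at hb2' hbmem hbpos hbe hlt hba hs2
  have hw1 : 2*i+2 ≤ col q (b-1) := by
    have := galois.mp (show (b-1)+1 ≤ row q (2*i+1) by omega)
    omega
  have hu1 : col q b ≤ 2*i+1 := by
    by_contra hc
    have := galois.mpr (show (2*i+1)+1 ≤ col q b by omega)
    omega
  have hcount : q.count b + col q b = col q (b-1) := count_eq_col_sub (by omega)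
  have hceven : Even (q.count b) := horth b (Nat.even_iff.mpr (by omega))
  have hc2 : 2 ≤ q.count b := by
    have h1 : 1 ≤ q.count b := Multiset.count_pos.mpr hbmem
    rcases hceven with ⟨m, hm⟩
    omega
  have hrun : ∀ t, col q b ≤ t → t < col q (b-1) → row q t = b := by
    intro t ht1 ht2
    have h1 : b ≤ row q t := by
      have := galois.mpr (show t+1 ≤ col q (b-1) by omega)
      omega
    have h2 : ¬ (b+1 ≤ row q t) := fun hcon => by
      have := galois.mp (show b + 1 ≤ row q t from hcon)
      omega
    omega
  have hpsw : psum q (col q (b-1)) = psum q (2*i+2) + (col q (b-1) - (2*i+2)) * b :=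
    psum_run q hw1 (fun t ht1 ht2 => hrun t (by omega) ht2)
  have hmulw : (col q (b-1) - (2*i+2)) * b % 2 = 0 := by
    rw [mul_mod2, show b % 2 = 0 by omega]
    omega
  have hpswodd : psum q (col q (b-1)) % 2 = 1 := by omega
  have hwodd : col q (b-1) % 2 = 1 := by
    have hcorner : row q (col q (b-1)) < row q (col q (b-1) - 1) := by
      have hlow : ¬ (b ≤ row q (col q (b-1))) := fun hcon => by
        have := galois.mp (show (b-1)+1 ≤ row q (col q (b-1)) by omega)
        omega
      have hhigh := hrun (col q (b-1) - 1) (by omega) (by omega)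
      omega
    have := corner_parity' horth (x := col q (b-1)) (by omega) hcorner
    omega
  have hpsu : psum q (col q (b-1)) = psum q (col q b) + (col q (b-1) - col q b) * b :=
    psum_run q (by omega) hrun
  have hmulu : (col q (b-1) - col q b) * b % 2 = 0 := by
    rw [mul_mod2, show b % 2 = 0 by omega]
    omega
  have hpsuodd : psum q (col q b) % 2 = 1 := by omega
  have hupos : 1 ≤ col q b := by
    by_contra hc
    have : col q b = 0 := by omega
    rw [this, psum_zero] at hpsuodd
    omega
  -- strictness inside the run
  have hstrict : ∀ k, col q b + 1 ≤ k → k ≤ col q (b-1) - 1 →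
      psum q k < psum (transpose z) k := by
    intro k hk1 hk2
    rcases lt_or_ge (psum q k) (psum (transpose z) k) with h | h
    · exact h
    exfalso
    have heqk : psum q k = psum (transpose z) k := le_antisymm (hdom k) h
    have hrtz : 1 ≤ row (transpose z) (k-1) := by
      by_contra hc
      have h0' : row (transpose z) k = 0 := by
        have := row_mono (s := transpose z) (show k-1 ≤ k by omega)
        omega
      have hq1 : psum q (k+1) = psum q k + row q k := psum_succ q k
      have ht1 : psum (transpose z) (k+1) = psum (transpose z) k + row (transpose z) k :=
        psum_succ _ k
      have hd := hdom (k+1)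
      have hrqk : row q k = b := hrun k (by omega) (by omega)
      omega
    obtain ⟨j, hj1, hfl, hj3, hj4, hqfl⟩ := prop_corner hdom
      (col (transpose z) (row (transpose z) (k-1) - 1)) (k-1) hrtz (by omega)
      (by rw [show k-1+1 = k by omega]; exact heqk)
    have hrowj : row q j = b := by
      rw [hqfl j hj1 le_rfl, hrun (k-1) (by omega) (by omega)]
    have hup : j + 1 ≤ col q (b-1) := by
      have := galois.mp (show (b-1)+1 ≤ row q j by omega)
      omega
    have hdown : ¬ (j + 2 ≤ col q (b-1)) := fun hcon => by
      have := galois.mpr (show (j+1)+1 ≤ col q (b-1) from hcon)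
      omega
    have hjw : j + 1 = col q (b-1) := by omega
    have hodd := tz_parity hN hz hzo (k := col q (b-1)) (by omega)
    rw [hjw] at hj3
    omega
  -- the box move
  have hdom2 : DomLE (boxMove q b) (transpose z) := by
    intro k
    have hps := bm_psum hb2' hc2 hqpart.2 k
    have hd := hdom k
    rcases le_or_gt k (col q b) with hk | hk
    · omega
    rcases le_or_gt (col q (b-1)) k with hk2 | hk2
    · omega
    · have := hstrict k (by omega) (by omega)
      omega
  have hbm := hmax (boxMove q b)
    ⟨(bm_sum hb2' hc2).trans hqpart.1, bm_zero hb2' hc2 hqpart.2⟩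
    (bm_orth hb2' hc2 (by omega) horth) hdom2
  have hfin := hbm (col q b + 1)
  have hps := bm_psum hb2' hc2 hqpart.2 (col q b + 1)
  omega

lemma pairs_all {N : ℕ} {z q : Multiset ℕ} (hN : N % 2 = 0) (hz : IsPartitionOf N z)
    (hzo : IsOrthogonal z) (hcert : IsCollapseOf IsOrthogonal N (transpose z) q) :
    ∀ i, psum q (2*i) % 2 = 0 ∧ row q (2*i) % 2 = row q (2*i+1) % 2 := by
  intro i
  induction i with
  | zero =>
    refine ⟨by rw [show 2*0 = 0 from rfl, psum_zero], ?_⟩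
    exact pairs_step hN hz hzo hcert 0 (by rw [show 2*0 = 0 from rfl, psum_zero])
  | succ i ih =>
    have hs1 : psum q (2*i+1) = psum q (2*i) + row q (2*i) := psum_succ q (2*i)
    have hs2 : psum q (2*i+2) = psum q (2*i+1) + row q (2*i+1) := by
      have := psum_succ q (2*i+1)
      rw [show 2*i+1+1 = 2*i+2 from rfl] at this
      exact this
    have he : 2*(i+1) = 2*i+2 := by ring
    have hps : psum q (2*(i+1)) % 2 = 0 := by
      rw [he]
      omega
    exact ⟨hps, pairs_step hN hz hzo hcert (i+1) hps⟩

/-- parity consequences for special orthogonal partitions of even `N`. -/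
lemma special_psum_parity {N : ℕ} {q : Multiset ℕ} (hN1 : 1 ≤ N) (hN : N % 2 = 0)
    (hq : IsPartitionOf N q) (hsp : IsSpecialOrth N q) :
    ∀ k, psum q k % 2 = (k % 2) * (row q (k-1) % 2) % 2 ∨ k = 0 := by
  obtain ⟨z, hz, hzo, hcert⟩ := special_extract hN1 hq hsp
  have hall := pairs_all hN hz hzo hcert
  intro k
  rcases Nat.eq_zero_or_pos k with rfl | hk
  · right; rfl
  left
  rcases Nat.even_or_odd k with he | ho
  · obtain ⟨t, ht⟩ := he
    have := (hall t).1
    rw [show k % 2 = 0 by omega]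
    rw [show 2*t = t + t by ring] at this
    rw [ht]
    omega
  · obtain ⟨t, ht⟩ := ho
    have h1 := (hall t).1
    have hs1 : psum q (2*t+1) = psum q (2*t) + row q (2*t) := psum_succ q (2*t)
    rw [ht, show (2*t+1) % 2 = 1 by omega, show 2*t+1-1 = 2*t from rfl]
    omega

end CAux

namespace CAux

section Main

variable {n : ℕ} {p : Multiset ℕ}

/-! ## structure of an all-odd partition and of `x = [p₁ p₁ (2n*-1) 1]` -/

lemma sum_odd_eq : ∀ (q : Multiset ℕ), (∀ a ∈ q, Odd a) →
    q.sum = 2 * (q.map (fun a => a / 2)).sum + Multiset.card q := by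
  intro q
  induction q using Multiset.induction_on with
  | empty => simp
  | cons a t ih =>
    intro hq
    have hodda := hq a (Multiset.mem_cons_self a t)
    have ih' := ih (fun b hb => hq b (Multiset.mem_cons_of_mem hb))
    simp only [Multiset.sum_cons, Multiset.map_cons, Multiset.card_cons]
    rcases hodda with ⟨t', ht'⟩
    omega

lemma countP_le_split (p : Multiset ℕ) (k : ℕ) :
    p.countP (fun a => a ≤ k) + col p k = Multiset.card p := by
  rw [col]
  induction p using Multiset.induction_on with
  | empty => simp
  | cons a t ih =>
    rw [Multiset.countP_cons, Multiset.countP_cons, Multiset.card_cons]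
    split_ifs <;> omega

lemma col_map_half (p : Multiset ℕ) (c : ℕ) :
    col (p.map (fun a => a / 2)) c = col p (2*c+1) := by
  rw [col, col, Multiset.countP_map, ← Multiset.countP_eq_card_filter]
  apply Multiset.countP_congr rfl
  intro a _
  exact propext ⟨fun h => by omega, fun h => by omega⟩

lemma half_row (p : Multiset ℕ) (c : ℕ) :
    row (p.map (fun a => a / 2)) c = row p c / 2 := by
  rw [row]
  have hset : (Finset.range (p.map (fun a => a / 2)).sum).filter
        (fun j => c + 1 ≤ col (p.map (fun a => a / 2)) j)
      = Finset.range (min (row p c / 2) ((p.map (fun a => a / 2)).sum)) := by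
    ext j
    simp only [Finset.mem_filter, Finset.mem_range, lt_min_iff]
    constructor
    · intro ⟨h1, h2⟩
      rw [col_map_half] at h2
      have := galois.mpr h2
      omega
    · intro ⟨h1, h2⟩
      refine ⟨h2, ?_⟩
      rw [col_map_half]
      exact galois.mp (show (2*j+1) + 1 ≤ row p c by omega)
  rw [hset, Finset.card_range]
  rcases Nat.eq_zero_or_pos (row p c / 2) with h0 | hpos
  · omega
  · have hmem : row p c ∈ p := row_mem (by omega)
    have hmem2 : row p c / 2 ∈ p.map (fun a => a / 2) := Multiset.mem_map_of_mem _ hmem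
    have := mem_le_sum hmem2
    omega

variable (hp : IsPartitionOf (2*n) p) (hodd : ∀ a ∈ p, Odd a) (hn : 1 ≤ n)

include hp hodd hn

lemma m_even : Multiset.card p % 2 = 0 := by
  have h1 := sum_parity p
  have h2 : p.countP (fun a => a % 2 = 1) = Multiset.card p :=
    Multiset.countP_eq_card.mpr (fun a ha => Nat.odd_iff.mp (hodd a ha))
  rw [hp.1, h2] at h1
  omega

lemma m_pos : 2 ≤ Multiset.card p := by
  have h1 := m_even hp hodd hn
  have h2 : Multiset.card p ≠ 0 := by
    intro h
    rw [Multiset.card_eq_zero] at h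
    rw [h] at hp
    simp [IsPartitionOf] at hp
    omega
  omega

lemma p_orth : IsOrthogonal p := by
  intro v hv
  have : v ∉ p := fun h => (Nat.not_odd_iff_even.mpr hv) (hodd v h)
  rw [Multiset.count_eq_zero_of_notMem this]
  exact Even.zero

lemma row_p_odd (c : ℕ) : row p c = 0 ∨ row p c % 2 = 1 := by
  rcases Nat.eq_zero_or_pos (row p c) with h | h
  · exact Or.inl h
  · exact Or.inr (Nat.odd_iff.mp (hodd _ (row_mem h)))

lemma min_part_le {a : ℕ} (ha : a ∈ p) : row p (Multiset.card p - 1) ≤ a := by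
  by_contra hc
  push_neg at hc
  have ha1 : 1 ≤ a := by
    rcases hodd a ha with ⟨t, ht⟩
    omega
  have h1 : 1 ≤ p.count a := Multiset.count_pos.mpr ha
  have h2 := count_eq_col_sub (s := p) (v := a) ha1
  have h3 : Multiset.card p ≤ col p a := by
    have := galois.mp (show a + 1 ≤ row p (Multiset.card p - 1) by omega)
    have hm := m_pos hp hodd hn
    omega
  have h4 := col_le_card p (a-1)
  omega

lemma nstar_val : 2 * nStar p - 1 = Multiset.card p - 1 := by
  have h2 : p.countP (Odd ·) = Multiset.card p :=
    Multiset.countP_eq_card.mpr (fun a ha => hodd a ha)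
  rw [nStar, h2]
  have := m_even hp hodd hn
  omega

/-- the multiset `x`, in convenient form. -/
lemma x_eq : 1 ::ₘ qqm (pOne p) (2 * nStar p - 1)
    = 1 ::ₘ (Multiset.card p - 1) ::ₘ (pOne p + pOne p) := by
  rw [nstar_val hp hodd hn, qqm, if_neg]
  have := m_pos hp hodd hn
  omega

lemma col_x_formula (c : ℕ) :
    col (1 ::ₘ (Multiset.card p - 1) ::ₘ (pOne p + pOne p)) c
      = (if c + 1 ≤ 1 then 1 else 0) + (if c + 1 ≤ Multiset.card p - 1 then 1 else 0)
        + 2 * (row p c / 2) := by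
  rw [col_cons, col_cons]
  have hadd : col (pOne p + pOne p) c = col (pOne p) c + col (pOne p) c := by
    rw [col, col, Multiset.countP_add]
  have hone : col (pOne p) c = row p c / 2 := by
    rw [pOne, col_transpose, half_row]
  omega

lemma col_x_0 : col (1 ::ₘ (Multiset.card p - 1) ::ₘ (pOne p + pOne p)) 0
    = row p 0 + 1 := by
  rw [col_x_formula hp hodd hn]
  have hm := m_pos hp hodd hn
  have h1 : 1 ≤ row p 0 := row_pos_of_lt_card hp.2 (by omega)
  rcases row_p_odd hp hodd hn 0 with h | h
  · omega
  · rw [if_pos (by omega), if_pos (by omega)]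
    omega

lemma col_x_m1 : col (1 ::ₘ (Multiset.card p - 1) ::ₘ (pOne p + pOne p))
      (Multiset.card p - 1) + 1 = row p (Multiset.card p - 1) := by
  rw [col_x_formula hp hodd hn]
  have hm := m_pos hp hodd hn
  have h1 : 1 ≤ row p (Multiset.card p - 1) := row_pos_of_lt_card hp.2 (by omega)
  rcases row_p_odd hp hodd hn (Multiset.card p - 1) with h | h
  · omega
  · rw [if_neg (by omega), if_neg (by omega)]
    omega

lemma col_x_other (c : ℕ) (h0 : c ≠ 0) (hm1 : c ≠ Multiset.card p - 1) :
    col (1 ::ₘ (Multiset.card p - 1) ::ₘ (pOne p + pOne p)) c = row p c := by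
  rw [col_x_formula hp hodd hn]
  have hm := m_pos hp hodd hn
  rw [if_neg (by omega)]
  rcases lt_or_ge c (Multiset.card p - 1) with hc | hc
  · have h1 : 1 ≤ row p c := row_pos_of_lt_card hp.2 (by omega)
    rcases row_p_odd hp hodd hn c with h | h
    · omega
    · rw [if_pos (by omega)]
      omega
  · have h1 : row p c = 0 := row_eq_zero (by omega)
    rw [if_neg (by omega)]
    omega

lemma x_sum : (1 ::ₘ (Multiset.card p - 1) ::ₘ (pOne p + pOne p)).sum = 2*n := by
  have hm := m_pos hp hodd hn
  rw [Multiset.sum_cons, Multiset.sum_cons, Multiset.sum_add]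
  have h1 : (pOne p).sum = (p.map (fun a => a / 2)).sum := transpose_sum _
  have h2 : p.sum = 2 * (p.map (fun a => a / 2)).sum + Multiset.card p :=
    sum_odd_eq p hodd
  have := hp.1
  omega

lemma x_zero : 0 ∉ (1 ::ₘ (Multiset.card p - 1) ::ₘ (pOne p + pOne p)) := by
  have hm := m_pos hp hodd hn
  intro h
  rcases Multiset.mem_cons.mp h with h | h
  · omega
  rcases Multiset.mem_cons.mp h with h | h
  · omega
  · rcases Multiset.mem_add.mp h with h | h <;>
      exact zero_notMem_transpose _ h

end Main

end CAux

namespace CAux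

lemma special_psum_even {N : ℕ} {q : Multiset ℕ} (hN1 : 1 ≤ N) (hN : N % 2 = 0)
    (hq : IsPartitionOf N q) (hsp : IsSpecialOrth N q) {k : ℕ} (hk : k % 2 = 0) :
    psum q k % 2 = 0 := by
  obtain ⟨z, hz, hzo, hcert⟩ := special_extract hN1 hq hsp
  have hall := pairs_all hN hz hzo hcert
  obtain ⟨t, ht⟩ : ∃ t, k = 2 * t := ⟨k / 2, by omega⟩
  rw [ht]
  exact (hall t).1

lemma special_psum_odd {N : ℕ} {q : Multiset ℕ} (hN1 : 1 ≤ N) (hN : N % 2 = 0)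
    (hq : IsPartitionOf N q) (hsp : IsSpecialOrth N q) {k : ℕ} (hk : k % 2 = 1) :
    psum q k % 2 = row q (k-1) % 2 := by
  obtain ⟨z, hz, hzo, hcert⟩ := special_extract hN1 hq hsp
  have hall := pairs_all hN hz hzo hcert
  obtain ⟨t, ht⟩ : ∃ t, k = 2 * t + 1 := ⟨k / 2, by omega⟩
  have h1 := (hall t).1
  have hs1 : psum q (2*t+1) = psum q (2*t) + row q (2*t) := psum_succ q (2*t)
  rw [ht, show 2*t+1-1 = 2*t from rfl]
  omega

section Main2

variable {n : ℕ} {p : Multiset ℕ}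
variable (hp : IsPartitionOf (2*n) p) (hodd : ∀ a ∈ p, Odd a) (hn : 1 ≤ n)

include hp hodd hn

lemma x_psum (k : ℕ) :
    psum (1 ::ₘ (Multiset.card p - 1) ::ₘ (pOne p + pOne p)) k
        + (if row p (Multiset.card p - 1) ≤ k then 1 else 0)
      = psum (transpose p) k + (if row p 0 + 1 ≤ k then 1 else 0) := by
  have hm := m_pos hp hodd hn
  have hcard : Multiset.card p ≤ 2*n := hp.1 ▸ card_le_sum hp.2
  have hn2 : 1 ≤ 2*n := by omega
  rw [psum_eq_sum_col, psum_eq_sum_col, x_sum hp hodd hn, transpose_sum, hp.1]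
  have h0mem : 0 ∈ Finset.range (2*n) := Finset.mem_range.mpr (by omega)
  have hm1mem : Multiset.card p - 1 ∈ (Finset.range (2*n)).erase 0 := by
    rw [Finset.mem_erase, Finset.mem_range]
    omega
  have hsplit : ∀ f : ℕ → ℕ,
      ∑ c ∈ Finset.range (2*n), f c
        = f 0 + (f (Multiset.card p - 1)
            + ∑ c ∈ ((Finset.range (2*n)).erase 0).erase (Multiset.card p - 1), f c) := by
    intro f
    rw [Finset.add_sum_erase _ f hm1mem, Finset.add_sum_erase _ f h0mem]
  rw [hsplit (fun c => min k (col (1 ::ₘ (Multiset.card p - 1) ::ₘ (pOne p + pOne p)) c)),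
    hsplit (fun c => min k (col (transpose p) c))]
  have hsame : ∑ c ∈ ((Finset.range (2*n)).erase 0).erase (Multiset.card p - 1),
        min k (col (1 ::ₘ (Multiset.card p - 1) ::ₘ (pOne p + pOne p)) c)
      = ∑ c ∈ ((Finset.range (2*n)).erase 0).erase (Multiset.card p - 1),
        min k (col (transpose p) c) := by
    apply Finset.sum_congr rfl
    intro c hc
    rw [Finset.mem_erase, Finset.mem_erase] at hc
    rw [col_x_other hp hodd hn c hc.2.1 hc.1, col_transpose]
  rw [hsame]
  have h1 := col_x_0 hp hodd hn
  have h2 := col_x_m1 hp hodd hn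
  have h3 : col (transpose p) 0 = row p 0 := col_transpose p 0
  have h4 : col (transpose p) (Multiset.card p - 1) = row p (Multiset.card p - 1) :=
    col_transpose p _
  have h5 : 1 ≤ row p (Multiset.card p - 1) := row_pos_of_lt_card hp.2 (by omega)
  split_ifs <;> omega

lemma T_parity_odd {k : ℕ} (hk : k % 2 = 1) : psum (transpose p) k % 2 = 0 := by
  rw [psum_transpose hp.2, sum_col_eq]
  have h1 := sum_parity (p.map (fun a => min a k))
  rw [Multiset.countP_map, ← Multiset.countP_eq_card_filter] at h1
  have h2 : p.countP (fun a => min a k % 2 = 1) = Multiset.card p := by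
    apply Multiset.countP_eq_card.mpr
    intro a ha
    rcases hodd a ha with ⟨t, ht⟩
    show min a k % 2 = 1
    omega
  rw [h2] at h1
  have := m_even hp hodd hn
  omega

lemma T_parity_even {k : ℕ} (hk : k % 2 = 0) :
    psum (transpose p) k % 2 = row (transpose p) k % 2 := by
  rw [psum_transpose hp.2, sum_col_eq]
  have h1 := sum_parity (p.map (fun a => min a k))
  rw [Multiset.countP_map, ← Multiset.countP_eq_card_filter] at h1
  have h2 : p.countP (fun a => min a k % 2 = 1)
      = p.countP (fun a => a ≤ k) := by
    apply Multiset.countP_congr rfl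
    intro a ha
    rcases hodd a ha with ⟨t, ht⟩
    exact propext ⟨fun h => by omega, fun h => by omega⟩
  have h3 := countP_le_split p k
  have h4 : row (transpose p) k = col p k := row_transpose hp.2 k
  have h5 := m_even hp hodd hn
  rw [h2] at h1
  omega

lemma epsT_bound {k : ℕ} (hE : E (transpose p) k) :
    row p (Multiset.card p - 1) ≤ k ∧ k ≤ row p 0 := by
  have hm := m_pos hp hodd hn
  have hk1 : 1 ≤ k := hE.1
  have hT := transpose_partition hp
  have hrow : 1 ≤ row (transpose p) (k-1) := by
    have := E_row_pos hT.2 (k := k-1) (by rw [show k-1+1 = k by omega]; exact hE)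
    omega
  constructor
  · -- lower bound
    by_contra hc
    push_neg at hc
    have hcolall : ∀ t, t < row p (Multiset.card p - 1) → col p t = Multiset.card p := by
      intro t ht
      apply Multiset.countP_eq_card.mpr
      intro a ha
      have := min_part_le hp hodd hn ha
      omega
    have hflat : Flat (transpose p) (k-1) k := by
      intro i hi1 hi2
      rw [row_transpose hp.2, row_transpose hp.2, hcolall i (by omega),
        hcolall (k-1) (by omega)]
    have hps : ∀ j, j ≤ k + 1 → psum (transpose p) j = j * Multiset.card p := by
      intro j hj
      rw [psum_transpose hp.2]
      have : ∀ i ∈ Finset.range j, col p i = Multiset.card p := by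
        intro i hi
        simp only [Finset.mem_range] at hi
        exact hcolall i (by omega)
      rw [Finset.sum_congr rfl this, Finset.sum_const, Finset.card_range]
      ring
    have hnp1 : ¬ Par (transpose p) k := by
      have := hE.2 (k-1) le_rfl (flat_refl _ _)
      rw [show k-1+1 = k by omega] at this
      exact this
    have hnp2 : ¬ Par (transpose p) (k+1) := hE.2 k (by omega) hflat
    simp only [Par] at hnp1 hnp2
    rw [hps k (by omega)] at hnp1
    rw [hps (k+1) (by omega)] at hnp2
    have hme := m_even hp hodd hn
    have e1 : k * Multiset.card p % 2 = 0 := by rw [mul_mod2, hme]; omega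
    have e2 : (k+1) * Multiset.card p % 2 = 0 := by rw [mul_mod2, hme]; omega
    omega
  · -- upper bound
    rw [row_transpose hp.2] at hrow
    have := galois.mpr (show 0 + 1 ≤ col p (k-1) by omega)
    omega

end Main2

end CAux


open CAux in
/-- Theorem 4.2(3), all parts odd: let `p` be a partition of `2n`
(`n ≥ 1`) all of whose parts are odd (hence `p` is orthogonal with an even number of
parts and `n* ≥ 1`). Then `[p₁ p₁ (2n*−1) 1]^{SO_{2n}} = (p^t)_{SO_{2n}}`. -/
theorem criterion_so_even_odd_parts (n : ℕ) (hn : 1 ≤ n) (p : Multiset ℕ)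
    (hp : IsPartitionOf (2 * n) p) (hodd : ∀ a ∈ p, Odd a) :
    orthExpansion (2 * n) (1 ::ₘ qqm (pOne p) (2 * nStar p - 1)) =
      orthCollapse (2 * n) (transpose p) := by
  classical
  have hN1 : 1 ≤ 2*n := by omega
  have hNe : (2*n) % 2 = 0 := by omega
  have hT := CAux.transpose_partition hp
  have certY := CAux.gcoll_collapse hT
  rw [CAux.orthCollapse_eq certY, CAux.x_eq hp hodd hn]
  apply CAux.orthExpansion_eq
  have hmono : row p (Multiset.card p - 1) ≤ row p 0 := CAux.row_mono (by omega)
  have hm := CAux.m_pos hp hodd hn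
  refine ⟨certY.1, certY.2.1, CAux.special_gcoll hp (CAux.p_orth hp hodd hn), ?_, ?_⟩
  · -- DomLE x Y
    intro k
    have hxps := CAux.x_psum hp hodd hn k
    have hYps := CAux.gcoll_psum hT.2 k
    rcases Nat.eq_zero_or_pos (CAux.eps (transpose p) k) with h0 | hpos
    · split_ifs at hxps <;> omega
    · have h1 : CAux.eps (transpose p) k = 1 := by
        have := CAux.eps_le_one (transpose p) k
        omega
      obtain ⟨hb1, hb2⟩ := CAux.epsT_bound hp hodd hn ((CAux.eps_one_iff _ _).mp h1)
      rw [if_pos (by omega), if_neg (by omega)] at hxps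
      omega
  · -- minimality
    intro q' hq' horthq' hspq' hdomxq' k
    have hYps := CAux.gcoll_psum hT.2 k
    have hd := hdomxq' k
    have hxps := CAux.x_psum hp hodd hn k
    rcases Nat.eq_zero_or_pos (CAux.eps (transpose p) k) with h0 | hpos
    swap
    · have h1 : CAux.eps (transpose p) k = 1 := by
        have := CAux.eps_le_one (transpose p) k
        omega
      obtain ⟨hb1, hb2⟩ := CAux.epsT_bound hp hodd hn ((CAux.eps_one_iff _ _).mp h1)
      rw [if_pos (by omega), if_neg (by omega)] at hxps
      omega
    -- eps = 0 : need psum q' k ≥ psum T k in the region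
    rcases le_or_gt (row p (Multiset.card p - 1)) k with hbr | hbr
    swap
    · rw [if_neg (by omega)] at hxps
      split_ifs at hxps <;> omega
    rcases le_or_gt (row p 0 + 1) k with hb1 | hb1
    · rw [if_pos (by omega), if_pos (by omega)] at hxps
      omega
    rw [if_pos (by omega), if_neg (by omega)] at hxps
    by_contra hcon
    push_neg at hcon
    have heqk : psum q' k + 1 = psum (transpose p) k := by omega
    have hk1 : 1 ≤ k := by
      have : 1 ≤ row p (Multiset.card p - 1) := CAux.row_pos_of_lt_card hp.2 (by omega)
      omega
    -- the parity witness
    have hnE : ¬ CAux.E (transpose p) k := (CAux.eps_zero_iff _ _).mp (by omega)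
    rw [show k = (k-1)+1 by omega, CAux.E_succ_iff] at hnE
    push_neg at hnE
    obtain ⟨j, hj, hfl, hpar⟩ := hnE
    -- neighbour bounds
    have hXlow : ∀ t, psum (transpose p) t
        ≤ psum (1 ::ₘ (Multiset.card p - 1) ::ₘ (pOne p + pOne p)) t + 1 := by
      intro t
      have := CAux.x_psum hp hodd hn t
      split_ifs at this <;> omega
    have hd1 := le_trans (hXlow (k-1)) (by have := hdomxq' (k-1); omega :
      psum (1 ::ₘ (Multiset.card p - 1) ::ₘ (pOne p + pOne p)) (k-1) + 1 ≤ psum q' (k-1) + 1)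
    have hd2 := le_trans (hXlow (k+1)) (by have := hdomxq' (k+1); omega :
      psum (1 ::ₘ (Multiset.card p - 1) ::ₘ (pOne p + pOne p)) (k+1) + 1 ≤ psum q' (k+1) + 1)
    have hr1 : psum q' k = psum q' (k-1) + row q' (k-1) := by
      have := CAux.psum_succ q' (k-1)
      rw [show k-1+1 = k by omega] at this
      exact this
    have hT1 : psum (transpose p) k = psum (transpose p) (k-1) + row (transpose p) (k-1) := by
      have := CAux.psum_succ (transpose p) (k-1)
      rw [show k-1+1 = k by omega] at this
      exact this
    have hr2 : psum q' (k+1) = psum q' k + row q' k := CAux.psum_succ q' k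
    have hT2 : psum (transpose p) (k+1)
        = psum (transpose p) k + row (transpose p) k := CAux.psum_succ (transpose p) k
    have hrowup : row q' (k-1) ≤ row (transpose p) (k-1) := by omega
    have hrowdown : row (transpose p) k ≤ row q' k := by omega
    have hmonoq : row q' k ≤ row q' (k-1) := CAux.row_mono (by omega)
    rcases eq_or_lt_of_le hj with hjk | hjk
    · -- j = k-1 : Par T k
      have hprk : CAux.Par (transpose p) k := by
        rw [show k = (k-1)+1 by omega, hjk]
        exact hpar
      simp only [CAux.Par] at hprk
      rcases Nat.even_or_odd k with hke | hko
      · rw [Nat.even_iff] at hke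
        have := CAux.special_psum_even hN1 hNe hq' hspq' (k := k) hke
        omega
      · have hko' := Nat.odd_iff.mp hko
        have := CAux.T_parity_odd hp hodd hn hko'
        omega
    · -- j ≥ k : flat step
      have hflk : row (transpose p) k = row (transpose p) (k-1) := hfl k (by omega) (by omega)
      have hveq : row q' (k-1) = row (transpose p) (k-1) := by omega
      have hveq2 : row q' k = row (transpose p) (k-1) := by omega
      have hpsflat : psum (transpose p) (j+1)
          = psum (transpose p) (k-1) + (j + 1 - (k-1)) * row (transpose p) (k-1) :=
        CAux.psum_flat (by omega) hfl
      simp only [CAux.Par] at hpar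
      rcases Nat.even_or_odd (row (transpose p) (k-1)) with hve | hvo
      · -- v even : direct parity contradiction
        rw [Nat.even_iff] at hve
        rcases Nat.even_or_odd k with hke | hko
        · rw [Nat.even_iff] at hke
          have hsp1 := CAux.special_psum_even hN1 hNe hq' hspq' (k := k) hke
          have hTp := CAux.T_parity_even hp hodd hn (k := k) hke
          omega
        · have hko' := Nat.odd_iff.mp hko
          have hsp1 := CAux.special_psum_odd hN1 hNe hq' hspq' (k := k) hko'
          have hTp := CAux.T_parity_odd hp hodd hn (k := k) hko'
          omega
      · -- v odd
        have hvo' := Nat.odd_iff.mp hvo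
        have hmul : (j + 1 - (k-1)) * row (transpose p) (k-1) % 2
            = (j + 1 - (k-1)) % 2 := by
          rw [CAux.mul_mod2, hvo']
          omega
        rcases Nat.even_or_odd k with hke | hko
        · rw [Nat.even_iff] at hke
          have hsp1 := CAux.special_psum_even hN1 hNe hq' hspq' (k := k) hke
          omega
        · have hko' := Nat.odd_iff.mp hko
          have hsp1 := CAux.special_psum_odd hN1 hNe hq' hspq' (k := k) hko'
          have hTp := CAux.T_parity_odd hp hodd hn (k := k) hko'
          omega
end

section
/- Let p be an orthogonal partition of 2n all of whose parts are even (so every part occurs with even multiplicity and n* = 0, in which case the extra parts 2n*−1 and 1 in the construction cancel). Then [p_1 p_1]^{SO_{2n}} = (p^t)_{SO_{2n}}, where [p_1 p_1] is the partition of 2n whose parts are the parts of two copies of p_1. (Theorem 4.2(3) of the paper for G_n = SO^α_{2n} in the case that all parts have the same even parity; here η_{so_{2n},so_{2n}}(p) = (p^t)_{SO_{2n}}.) -/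
/-!
When every part of `p` is even, the columns `2i - 1` and `2i` of the Young diagram of `p` have
the same length, so `p^t = [p₁ p₁]`. Hence every part of `p^t` occurs an even number of times:
`p^t` is orthogonal and is its own collapse. Its transpose `p` is orthogonal as well, so `p^t` is
special, and therefore `[p₁ p₁] = p^t` is its own expansion. Collapses and expansions are
characterised only up to dominance, so the real work is that dominance is antisymmetric on
partitions, which rests on `transpose` being an involution.
-/

namespace Multiset

lemma countP_le_countP_of_imp {α : Type*} {P Q : α → Prop} [DecidablePred P]
    [DecidablePred Q] (s : Multiset α) (h : ∀ a, P a → Q a) : s.countP P ≤ s.countP Q := by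
  simpa only [countP_eq_card_filter] using card_le_card (monotone_filter_right s h)

lemma sum_map_ite_one_zero {α : Type*} {P : α → Prop} [DecidablePred P]
    (s : Multiset α) : (s.map (fun a => if P a then 1 else 0)).sum = s.countP P := by
  induction s using Multiset.induction_on with
  | empty => simp
  | cons a s ih => by_cases h : P a <;> simp [h, ih, add_comm]

lemma countP_range_lt (N k : ℕ) : (range N).countP (· < k) = min k N := by
  induction N with
  | zero => simp
  | succ N ih =>
    simp only [range_succ, countP_cons, ih]
    split_ifs <;> omega

lemma succ_le_countP_range_iff_of_antitone {f : ℕ → ℕ} (hf : Antitone f) {N k m : ℕ}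
    (hk : k < N) : k + 1 ≤ (range N).countP (fun j => m ≤ f j) ↔ m ≤ f k := by
  constructor
  · intro h
    by_contra! hlt
    have hsub : (range N).countP (fun j => m ≤ f j) ≤ (range N).countP (· < k) :=
      countP_le_countP_of_imp _ fun j hj => by
        by_contra! hkj
        exact absurd (hj.trans (hf hkj)) (by omega)
    rw [countP_range_lt] at hsub
    omega
  · intro h
    have hsup : (range N).countP (· < k + 1) ≤ (range N).countP (fun j => m ≤ f j) :=
      countP_le_countP_of_imp _ fun j hj => h.trans (hf (Nat.lt_succ_iff.mp hj))
    rw [countP_range_lt] at hsup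
    omega

lemma card_le_sum_of_zero_notMem {s : Multiset ℕ} (hs : 0 ∉ s) : card s ≤ s.sum := by
  simpa using card_nsmul_le_sum fun a ha =>
    Nat.one_le_iff_ne_zero.mpr fun h => hs (h ▸ ha)

lemma sum_filter_pos (s : Multiset ℕ) : (s.filter (0 < ·)).sum = s.sum := by
  induction s using Multiset.induction_on with
  | empty => simp
  | cons a s ih => rcases Nat.eq_zero_or_pos a with rfl | ha <;> simp [*]

lemma range_two_mul (n : ℕ) :
    range (2 * n) = (range n).map (2 * ·) + (range n).map (2 * · + 1) := by
  induction n with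
  | zero => simp
  | succ n ih =>
    rw [show 2 * (n + 1) = 2 * n + 1 + 1 by ring]
    simp only [range_succ, map_cons, ih, cons_add, add_cons]

end Multiset

/-- The part `(p^t)_{j+1}` of the transpose. -/
def countGT (p : Multiset ℕ) (j : ℕ) : ℕ := p.countP (fun a => j + 1 ≤ a)

lemma countGT_antitone (p : Multiset ℕ) : Antitone (countGT p) := fun _ _ h =>
  Multiset.countP_le_countP_of_imp p fun _ ha => le_trans (by omega) ha

lemma countGT_le_sum {p : Multiset ℕ} (hp : 0 ∉ p) (j : ℕ) : countGT p j ≤ p.sum :=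
  (Multiset.countP_le_card _ _).trans (Multiset.card_le_sum_of_zero_notMem hp)

lemma countGT_eq_zero_of_sum_le {p : Multiset ℕ} {j : ℕ} (hj : p.sum ≤ j) : countGT p j = 0 :=
  Multiset.countP_eq_zero.mpr fun a ha => by have := Multiset.le_sum_of_mem ha; omega

lemma countGT_eq_sum_map (p : Multiset ℕ) (j : ℕ) :
    countGT p j = (p.map (fun a => if j < a then 1 else 0)).sum :=
  (Multiset.sum_map_ite_one_zero p).symm

lemma countGT_eq_count_succ_add (p : Multiset ℕ) (a : ℕ) :
    countGT p a = p.count (a + 1) + countGT p (a + 1) := by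
  induction p using Multiset.induction_on with
  | empty => simp [countGT]
  | cons b s ih =>
    simp only [countGT, Multiset.countP_cons, Multiset.count_cons] at ih ⊢
    split_ifs <;> omega

lemma eq_of_countGT_eq {p q : Multiset ℕ} (hp : 0 ∉ p) (hq : 0 ∉ q)
    (h : ∀ j, countGT p j = countGT q j) : p = q := by
  ext (_ | a)
  · rw [Multiset.count_eq_zero_of_notMem hp, Multiset.count_eq_zero_of_notMem hq]
  · have := countGT_eq_count_succ_add p a
    have := countGT_eq_count_succ_add q a
    have := h a
    have := h (a + 1)
    omega

lemma zero_notMem_transpose (p : Multiset ℕ) : 0 ∉ transpose p := fun h =>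
  (Multiset.mem_filter.mp h).2.false

lemma countGT_transpose (p : Multiset ℕ) (k : ℕ) :
    countGT (transpose p) k = (Multiset.range p.sum).countP (fun j => k + 1 ≤ countGT p j) := by
  rw [countGT, transpose, Multiset.countP_filter, Multiset.countP_map,
    Multiset.countP_eq_card_filter]
  congr 2
  ext j
  simp only [countGT]
  omega

lemma sum_transpose (p : Multiset ℕ) : (transpose p).sum = p.sum := by
  have hrow : ∀ a ∈ p, ((Multiset.range p.sum).map (fun j => if j < a then 1 else 0)).sum = a :=
    fun a ha => by
      rw [Multiset.sum_map_ite_one_zero, Multiset.countP_range_lt]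
      exact min_eq_left (Multiset.le_sum_of_mem ha)
  calc (transpose p).sum
      = ((Multiset.range p.sum).map (countGT p)).sum := Multiset.sum_filter_pos _
    _ = (p.map fun a => ((Multiset.range p.sum).map fun j => if j < a then 1 else 0).sum).sum := by
        simp only [countGT_eq_sum_map]
        exact Multiset.sum_map_sum_map _ _
    _ = p.sum := by rw [Multiset.map_congr rfl hrow, Multiset.map_id']

lemma countGT_transpose_transpose {p : Multiset ℕ} (hp : 0 ∉ p) (k : ℕ) :
    countGT (transpose (transpose p)) k = countGT p k := by
  rcases lt_or_ge k p.sum with hk | hk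
  · have hrow : ∀ j, k + 1 ≤ countGT (transpose p) j ↔ j < countGT p k := fun j => by
      rw [countGT_transpose, Multiset.succ_le_countP_range_iff_of_antitone (countGT_antitone p) hk]
      omega
    rw [countGT_transpose, sum_transpose, Multiset.countP_congr rfl fun j _ => propext (hrow j),
      Multiset.countP_range_lt]
    exact min_eq_left (countGT_le_sum hp k)
  · rw [countGT_eq_zero_of_sum_le (by rwa [sum_transpose, sum_transpose]),
      countGT_eq_zero_of_sum_le hk]

lemma transpose_transpose {p : Multiset ℕ} (hp : 0 ∉ p) : transpose (transpose p) = p :=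
  eq_of_countGT_eq (zero_notMem_transpose _) hp (countGT_transpose_transpose hp)

lemma psum_succ (p : Multiset ℕ) (k : ℕ) :
    psum p (k + 1) = psum p k + countGT (transpose p) k := by
  rw [countGT_transpose, psum, psum, ← Multiset.sum_map_ite_one_zero, ← Multiset.sum_map_add]
  congr 1
  refine Multiset.map_congr rfl fun j _ => ?_
  by_cases h : k + 1 ≤ countGT p j <;> simp only [h, if_true, if_false] <;> unfold countGT at h <;>
    omega

lemma DomLE.refl (p : Multiset ℕ) : DomLE p p := fun _ => le_rfl

lemma DomLE.antisymm {p q : Multiset ℕ} (hp : 0 ∉ p) (hq : 0 ∉ q) (hpq : DomLE p q)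
    (hqp : DomLE q p) : p = q := by
  have hpsum : ∀ k, psum p k = psum q k := fun k => (hpq k).antisymm (hqp k)
  have hcol : ∀ k, countGT (transpose p) k = countGT (transpose q) k := fun k => by
    have := psum_succ p k
    have := psum_succ q k
    have := hpsum k
    have := hpsum (k + 1)
    omega
  rw [← transpose_transpose hp, ← transpose_transpose hq,
    eq_of_countGT_eq (zero_notMem_transpose p) (zero_notMem_transpose q) hcol]

lemma collapseOf_eq_self {P : Multiset ℕ → Prop} {N : ℕ} {q : Multiset ℕ}
    (hq : IsPartitionOf N q) (hPq : P q) : collapseOf P N q = q := by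
  have h : ∃ r, IsCollapseOf P N q r := ⟨q, hq, hPq, DomLE.refl q, fun _ _ _ h => h⟩
  obtain ⟨hr, -, hrq, hmax⟩ := h.choose_spec
  rw [collapseOf, dif_pos h]
  exact DomLE.antisymm hr.2 hq.2 hrq (hmax q hq hPq (DomLE.refl q))

lemma expansionOf_eq_self {P Sp : Multiset ℕ → Prop} {N : ℕ} {q : Multiset ℕ}
    (hq : IsPartitionOf N q) (hPq : P q) (hSq : Sp q) : expansionOf P Sp N q = q := by
  have h : ∃ r, IsExpansionOf P Sp N q r := ⟨q, hq, hPq, hSq, DomLE.refl q, fun _ _ _ _ h => h⟩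
  obtain ⟨hr, -, -, hqr, hmin⟩ := h.choose_spec
  rw [expansionOf, dif_pos h]
  exact DomLE.antisymm hr.2 hq.2 (hmin q hq hPq hSq (DomLE.refl q)) hqr

section EvenParts

variable {p : Multiset ℕ} (heven : ∀ a ∈ p, Even a)
include heven

lemma two_mul_sum_map_half : 2 * (p.map (· / 2)).sum = p.sum := by
  calc 2 * (p.map (· / 2)).sum = (p.map fun a => 2 * (a / 2)).sum :=
        Multiset.sum_map_mul_left.symm
    _ = (p.map id).sum := congrArg _ <| Multiset.map_congr rfl fun a ha => by
        obtain ⟨b, rfl⟩ := heven a ha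
        simp only [id]
        omega
    _ = p.sum := by rw [Multiset.map_id]

lemma countGT_map_half (j : ℕ) : countGT (p.map (· / 2)) (j / 2) = countGT p j := by
  rw [countGT, Multiset.countP_map, ← Multiset.countP_eq_card_filter]
  refine Multiset.countP_congr rfl fun a ha => ?_
  obtain ⟨b, rfl⟩ := heven a ha
  simp only [eq_iff_iff]
  omega

lemma transpose_eq_pOne_add_pOne : transpose p = pOne p + pOne p := by
  rw [pOne, transpose, transpose, ← two_mul_sum_map_half heven, Multiset.range_two_mul,
    Multiset.map_add, Multiset.map_map, Multiset.map_map, Multiset.filter_add]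
  congr 3 <;> funext i <;>
    exact (countGT_map_half heven _).symm.trans (by congr 1; beta_reduce; omega)

end EvenParts

lemma IsPartitionOf.transpose {N : ℕ} {p : Multiset ℕ} (hp : IsPartitionOf N p) :
    IsPartitionOf N (transpose p) :=
  ⟨(sum_transpose p).trans hp.1, zero_notMem_transpose p⟩

lemma isOrthogonal_add_self (q : Multiset ℕ) : IsOrthogonal (q + q) := fun a _ => by
  rw [Multiset.count_add]
  exact ⟨_, rfl⟩

lemma orthCollapse_eq_self {N : ℕ} {q : Multiset ℕ} (hq : IsPartitionOf N q)
    (horth : IsOrthogonal q) : orthCollapse N q = q :=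
  collapseOf_eq_self hq horth

lemma isSpecialOrth_transpose {N : ℕ} {p : Multiset ℕ} (hp : IsPartitionOf N p)
    (horth : IsOrthogonal p) (htorth : IsOrthogonal (transpose p)) :
    IsSpecialOrth N (transpose p) := by
  rw [IsSpecialOrth, transpose_transpose hp.2, orthCollapse_eq_self hp horth,
    orthCollapse_eq_self hp.transpose htorth]

theorem criterion_so_even_even_parts_general (n : ℕ) (p : Multiset ℕ)
    (hp : IsPartitionOf (2 * n) p) (horth : IsOrthogonal p)
    (heven : ∀ a ∈ p, Even a) :
    orthExpansion (2 * n) (pOne p + pOne p) = orthCollapse (2 * n) (transpose p) := by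
  have htorth : IsOrthogonal (transpose p) := by
    rw [transpose_eq_pOne_add_pOne heven]
    exact isOrthogonal_add_self (pOne p)
  rw [← transpose_eq_pOne_add_pOne heven, orthCollapse_eq_self hp.transpose htorth]
  exact expansionOf_eq_self hp.transpose htorth (isSpecialOrth_transpose hp horth htorth)

/-- Theorem 4.2(3), all parts even: let `p` be an orthogonal partition of
`2n` (`n ≥ 1`) all of whose parts are even (so `n* = 0` and the extra parts `2n*−1` and
`1` cancel). Then `[p₁ p₁]^{SO_{2n}} = (p^t)_{SO_{2n}}`. -/
theorem criterion_so_even_even_parts (n : ℕ) (hn : 1 ≤ n) (p : Multiset ℕ)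
    (hp : IsPartitionOf (2 * n) p) (horth : IsOrthogonal p)
    (heven : ∀ a ∈ p, Even a) :
    orthExpansion (2 * n) (pOne p + pOne p) = orthCollapse (2 * n) (transpose p) :=
  criterion_so_even_even_parts_general n p hp horth heven
end
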